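/- arXiv:1901.03048 — 5 statements merged into one kernel-verified Lean document; each statement's English description precedes it below -/
import Mathlib

section
/- Let μ ∈ M^p and for r > 0 let μ^(r) be the restriction of μ to {x ∈ Ω : d(x,∂Ω) > r}. Then OT_p(μ^(r), μ)^p ≤ Pers_p(μ) − Pers_p(μ^(r)), and consequently OT_p(μ^(r), μ) → 0 as r → 0. -/
noncomputable section

open MeasureTheory Metric Set Filter Topology ENNReal
open scoped Classical

/-- The plane with the Euclidean distance. -/
abbrev Pt : Type := EuclideanSpace ℝ (Fin 2)

/-- Build a point of the plane from coordinates. -/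
def mk2 (a b : ℝ) : Pt := (WithLp.equiv 2 (Fin 2 → ℝ)).symm ![a, b]

/-- The open upper half-plane Ω = {(t₁,t₂) : t₂ > t₁}. -/
def UHP : Set Pt := {x | x 0 < x 1}

/-- The diagonal ∂Ω = {(t,t)}. -/
def Diag : Set Pt := {x | x 0 = x 1}

/-- Ω̄ = Ω ∪ ∂Ω. -/
def UHPbar : Set Pt := UHP ∪ Diag

/-- Distance from a point to the diagonal. -/
def persDist (x : Pt) : ℝ := infDist x Diag

/-- p-th total persistence Pers_p(μ) = ∫_Ω d(x,∂Ω)^p dμ(x). -/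
def Pers (p : ℝ) (μ : Measure Pt) : ℝ≥0∞ :=
  ∫⁻ x in UHP, ENNReal.ofReal (persDist x ^ p) ∂μ

/-- μ ∈ M^p : a measure supported on Ω with finite p-th persistence. -/
def MemMp (p : ℝ) (μ : Measure Pt) : Prop := μ UHPᶜ = 0 ∧ Pers p μ < ⊤

/-- Admissible partial transport plans between μ and ν: measures on Ω̄ × Ω̄ whose
marginals restricted to Ω are μ and ν. -/
def Adm (μ ν : Measure Pt) : Set (Measure (Pt × Pt)) :=
  {π | π ((UHPbar ×ˢ UHPbar)ᶜ) = 0 ∧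
    (∀ A : Set Pt, MeasurableSet A → A ⊆ UHP → π (A ×ˢ univ) = μ A) ∧
    (∀ B : Set Pt, MeasurableSet B → B ⊆ UHP → π (univ ×ˢ B) = ν B)}

/-- Cost C_p(π) = ∬ d(x,y)^p dπ(x,y). -/
def Cost (p : ℝ) (π : Measure (Pt × Pt)) : ℝ≥0∞ :=
  ∫⁻ z, ENNReal.ofReal (dist z.1 z.2 ^ p) ∂π

/-- OT_p(μ,ν)^p, as an extended real. -/
def OTe (p : ℝ) (μ ν : Measure Pt) : ℝ≥0∞ := ⨅ π ∈ Adm μ ν, Cost p π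

/-- The optimal partial transport distance OT_p(μ,ν). -/
def OT (p : ℝ) (μ ν : Measure Pt) : ℝ := (OTe p μ ν ^ (1 / p)).toReal

/-- Optimal plans. -/
def OptSet (p : ℝ) (μ ν : Measure Pt) : Set (Measure (Pt × Pt)) :=
  {π | π ∈ Adm μ ν ∧ Cost p π = OTe p μ ν}

/-- Vague convergence of measures on Ω: convergence of integrals of continuous
functions compactly supported in Ω. -/
def VagueTendsto (μs : ℕ → Measure Pt) (μ : Measure Pt) : Prop :=
  ∀ f : Pt → ℝ, Continuous f → HasCompactSupport f → tsupport f ⊆ UHP →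
    Tendsto (fun n => ∫ x, f x ∂(μs n)) atTop (𝓝 (∫ x, f x ∂μ))

/-- E_Ω = (Ω̄ × Ω̄) \ (∂Ω × ∂Ω). -/
def EOm : Set (Pt × Pt) := (UHPbar ×ˢ UHPbar) \ (Diag ×ˢ Diag)

/-- Vague convergence of plans on E_Ω. -/
def VaguePlanTendsto (πs : ℕ → Measure (Pt × Pt)) (π : Measure (Pt × Pt)) : Prop :=
  ∀ f : Pt × Pt → ℝ, Continuous f → HasCompactSupport f → tsupport f ⊆ EOm →
    Tendsto (fun n => ∫ z, f z ∂(πs n)) atTop (𝓝 (∫ z, f z ∂π))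

/-- A persistence diagram: an ℕ-valued point measure Σ_{x ∈ X} n_x δ_x with
X ⊆ Ω locally finite in Ω. -/
def IsDiagram (μ : Measure Pt) : Prop :=
  ∃ (X : Set Pt) (n : Pt → ℕ), X ⊆ UHP ∧
    (∀ x ∈ UHP, ∃ U ∈ 𝓝 x, (X ∩ U).Finite) ∧
    μ = Measure.sum (fun x : X => (n x.1 : ℝ≥0∞) • Measure.dirac (x.1 : Pt))

/-- Support of a measure on Pt × Pt. -/
def msupp (π : Measure (Pt × Pt)) : Set (Pt × Pt) := {z | ∀ U ∈ 𝓝 z, π U ≠ 0}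

/-- Support of a measure on Pt. -/
def suppM (μ : Measure Pt) : Set Pt := {x | ∀ U ∈ 𝓝 x, μ U ≠ 0}

/-- Bottleneck cost of a plan: sup of d(x,y) over the support. -/
def CostInf (π : Measure (Pt × Pt)) : ℝ≥0∞ :=
  ⨆ z ∈ msupp π, ENNReal.ofReal (dist z.1 z.2)

/-- The bottleneck (∞) optimal partial transport distance, as extended real. -/
def OTinfE (μ ν : Measure Pt) : ℝ≥0∞ := ⨅ π ∈ Adm μ ν, CostInf π

/-- μ ∈ M^∞ : support at bounded distance from the diagonal. -/
def MemMinf (μ : Measure Pt) : Prop :=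
  μ UHPᶜ = 0 ∧ ∃ C : ℝ, ∀ x ∈ suppM μ, persDist x ≤ C

/-- A partial matching between two indexed families: a bijection between
subsets of the index sets; unmatched points are sent to the diagonal. -/
structure Matching (ι κ : Type*) where
  I : Set ι
  J : Set κ
  e : I ≃ J

/-- Cost of a partial matching for d_p (as the p-th power, extended real). -/
def mCost (p : ℝ) {ι κ : Type*} (x : ι → Pt) (y : κ → Pt) (m : Matching ι κ) : ℝ≥0∞ :=
  (∑' i : m.I, ENNReal.ofReal (dist (x i.1) (y (m.e i).1) ^ p))
  + (∑' i : ↥(m.Iᶜ), ENNReal.ofReal (persDist (x i.1) ^ p))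
  + (∑' j : ↥(m.Jᶜ), ENNReal.ofReal (persDist (y j.1) ^ p))

/-- Bottleneck cost of a partial matching. -/
def mCostInf {ι κ : Type*} (x : ι → Pt) (y : κ → Pt) (m : Matching ι κ) : ℝ≥0∞ :=
  (⨆ i : m.I, ENNReal.ofReal (dist (x i.1) (y (m.e i).1)))
  ⊔ (⨆ i : ↥(m.Iᶜ), ENNReal.ofReal (persDist (x i.1)))
  ⊔ (⨆ j : ↥(m.Jᶜ), ENNReal.ofReal (persDist (y j.1)))

/-- The point measure associated to an indexed family of points. -/
def famMeasure {ι : Type*} (x : ι → Pt) : Measure Pt :=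
  Measure.sum (fun i => Measure.dirac (x i))

/-- The weighted measure μ^p, with density d(x,∂Ω)^p with respect to μ. -/
def wgt (p : ℝ) (μ : Measure Pt) : Measure Pt :=
  μ.withDensity (fun x => ENNReal.ofReal (persDist x ^ p))

/-- The quotient space Ω̃ = Ω ⊔ {∂Ω}. -/
def Qt : Type := Option ↥UHP

/-- The quotient metric ρ on Ω̃. -/
def ρQ : Qt → Qt → ℝ
  | some x, some y => min (dist (x : Pt) (y : Pt)) (persDist x + persDist y)
  | some x, none => persDist x
  | none, some y => persDist y
  | none, none => 0

/-- The quotient metric ρ viewed on the plane, all diagonal points being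
identified. -/
def ρP (x y : Pt) : ℝ :=
  if x ∈ Diag then (if y ∈ Diag then 0 else persDist y)
  else if y ∈ Diag then persDist x
  else min (dist x y) (persDist x + persDist y)

/-- Couplings with full (equal-mass) marginals. -/
def Coup (μ ν : Measure Pt) : Set (Measure (Pt × Pt)) :=
  {π | π.map Prod.fst = μ ∧ π.map Prod.snd = ν}

/-- The p-Wasserstein distance (to the p) for the quotient metric ρ. -/
def WpE (p : ℝ) (μ ν : Measure Pt) : ℝ≥0∞ :=
  ⨅ π ∈ Coup μ ν, ∫⁻ z, ENNReal.ofReal (ρP z.1 z.2 ^ p) ∂π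

/-!
Keep the points of `μ` that lie farther than `r` from the diagonal where they are, and create the
others from their orthogonal projections onto the diagonal. This plan is admissible between `μ⁽ʳ⁾`
and `μ`, and its cost is `∫_{d(x,∂Ω) ≤ r} d(x,∂Ω)^p dμ = Pers_p(μ) − Pers_p(μ⁽ʳ⁾)`. As `r → 0` the
sets `{d(x,∂Ω) ≤ r}` decrease to the diagonal, which carries no `d(·,∂Ω)^p μ`-mass, so this cost
tends to `0` because `Pers_p(μ) < ∞`.
-/

lemma continuous_coord (i : Fin 2) : Continuous fun x : Pt => x i :=
  (EuclideanSpace.proj i : Pt →L[ℝ] ℝ).continuous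

lemma isOpen_UHP : IsOpen UHP := isOpen_lt (continuous_coord 0) (continuous_coord 1)

lemma isClosed_Diag : IsClosed Diag := isClosed_eq (continuous_coord 0) (continuous_coord 1)

lemma measurableSet_UHPbar : MeasurableSet UHPbar :=
  isOpen_UHP.measurableSet.union isClosed_Diag.measurableSet

lemma disjoint_Diag_UHP : Disjoint Diag UHP :=
  Set.disjoint_left.2 fun x (hd : x 0 = x 1) (hu : x 0 < x 1) => hu.ne hd

lemma continuous_persDist : Continuous persDist := continuous_infDist_pt Diag

lemma measurable_persDist_rpow (p : ℝ) :
    Measurable fun x => ENNReal.ofReal (persDist x ^ p) :=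
  (continuous_persDist.measurable.pow_const p).ennreal_ofReal

def diagProj (x : Pt) : Pt := ((x 0 + x 1) / 2) • mk2 1 1

lemma diagProj_apply (x : Pt) (i : Fin 2) : diagProj x i = (x 0 + x 1) / 2 := by
  fin_cases i <;> exact mul_one _

lemma diagProj_mem (x : Pt) : diagProj x ∈ Diag := by
  show diagProj x 0 = diagProj x 1
  rw [diagProj_apply, diagProj_apply]

lemma continuous_diagProj : Continuous diagProj :=
  (((continuous_coord 0).add (continuous_coord 1)).div_const 2).smul continuous_const

lemma dist_sq_coord (x y : Pt) : dist x y ^ 2 = (x 0 - y 0) ^ 2 + (x 1 - y 1) ^ 2 := by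
  rw [EuclideanSpace.dist_eq, Real.sq_sqrt (by positivity), Fin.sum_univ_two,
    Real.dist_eq, Real.dist_eq, sq_abs, sq_abs]

lemma dist_diagProj (x : Pt) : dist x (diagProj x) = persDist x := by
  refine le_antisymm ?_ (infDist_le_dist_of_mem (diagProj_mem x))
  have : Nonempty Diag := ⟨⟨diagProj x, diagProj_mem x⟩⟩
  rw [persDist, infDist_eq_iInf]
  refine le_ciInf fun ⟨y, (hy : y 0 = y 1)⟩ => ?_
  rw [← abs_of_nonneg dist_nonneg, ← abs_of_nonneg (dist_nonneg (x := x) (y := y)),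
    ← sq_le_sq, dist_sq_coord, dist_sq_coord, diagProj_apply, diagProj_apply, ← hy]
  nlinarith [sq_nonneg (x 0 + x 1 - 2 * y 0)]

def diagPlan (μ : Measure Pt) (A : Set Pt) : Measure (Pt × Pt) :=
  (μ.restrict A).map (fun x => (x, x)) + (μ.restrict Aᶜ).map (fun x => (diagProj x, x))

section diagPlan

variable {μ : Measure Pt} {A : Set Pt}

lemma measurable_diag_pair : Measurable fun x : Pt => (x, x) :=
  measurable_id.prodMk measurable_id

lemma measurable_diagProj_pair : Measurable fun x : Pt => (diagProj x, x) :=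
  continuous_diagProj.measurable.prodMk measurable_id

lemma diagPlan_mem_Adm (hμ : μ UHPᶜ = 0) (hA : MeasurableSet A) :
    diagPlan μ A ∈ Adm (μ.restrict A) μ := by
  refine ⟨?_, fun A' hA' hA'Ω => ?_, fun B hB _ => ?_⟩
  · have h₁ : (fun x : Pt => (x, x)) ⁻¹' (UHPbar ×ˢ UHPbar)ᶜ ⊆ UHPᶜ :=
      fun x hx hxΩ => hx ⟨Or.inl hxΩ, Or.inl hxΩ⟩
    have h₂ : (fun x : Pt => (diagProj x, x)) ⁻¹' (UHPbar ×ˢ UHPbar)ᶜ ⊆ UHPᶜ :=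
      fun x hx hxΩ => hx ⟨Or.inr (diagProj_mem x), Or.inl hxΩ⟩
    have hμ' (s : Set Pt) : μ.restrict s UHPᶜ = 0 :=
      Measure.restrict_le_self.absolutelyContinuous hμ
    rw [diagPlan, Measure.add_apply,
      Measure.map_apply measurable_diag_pair (measurableSet_UHPbar.prod measurableSet_UHPbar).compl,
      Measure.map_apply measurable_diagProj_pair
        (measurableSet_UHPbar.prod measurableSet_UHPbar).compl,
      measure_mono_null h₁ (hμ' A), measure_mono_null h₂ (hμ' Aᶜ), add_zero]
  · have h₂ : (fun x : Pt => (diagProj x, x)) ⁻¹' (A' ×ˢ univ) = ∅ :=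
      eq_empty_of_forall_notMem fun x hx =>
        disjoint_Diag_UHP.notMem_of_mem_left (diagProj_mem x) (hA'Ω hx.1)
    rw [diagPlan, Measure.add_apply,
      Measure.map_apply measurable_diag_pair (hA'.prod MeasurableSet.univ),
      Measure.map_apply measurable_diagProj_pair (hA'.prod MeasurableSet.univ), h₂,
      measure_empty, add_zero, mk_preimage_prod, preimage_univ, inter_univ, preimage_id']
  · rw [diagPlan, Measure.add_apply,
      Measure.map_apply measurable_diag_pair (MeasurableSet.univ.prod hB),
      Measure.map_apply measurable_diagProj_pair (MeasurableSet.univ.prod hB)]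
    simp only [mk_preimage_prod, preimage_univ, univ_inter, preimage_id']
    rw [← Measure.add_apply, Measure.restrict_add_restrict_compl hA]

lemma Cost_diagPlan {p : ℝ} (hp : p ≠ 0) (hA : MeasurableSet A) :
    Cost p (diagPlan μ A) = wgt p μ Aᶜ := by
  have hcost : Measurable fun z : Pt × Pt => ENNReal.ofReal (dist z.1 z.2 ^ p) :=
    ((continuous_fst.dist continuous_snd).measurable.pow_const p).ennreal_ofReal
  rw [Cost, diagPlan, lintegral_add_measure, lintegral_map hcost measurable_diag_pair,
    lintegral_map hcost measurable_diagProj_pair, wgt, withDensity_apply _ hA.compl]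
  simp only [dist_self, Real.zero_rpow hp, ENNReal.ofReal_zero, lintegral_zero, zero_add,
    dist_comm (diagProj _), dist_diagProj]

lemma OTe_restrict_le {p : ℝ} (hp : p ≠ 0) (hμ : μ UHPᶜ = 0) (hA : MeasurableSet A) :
    OTe p (μ.restrict A) μ ≤ wgt p μ Aᶜ :=
  Cost_diagPlan hp hA ▸ iInf₂_le _ (diagPlan_mem_Adm hμ hA)

end diagPlan

lemma Pers_eq_wgt_univ {p : ℝ} {μ : Measure Pt} (hμ : μ UHPᶜ = 0) :
    Pers p μ = wgt p μ univ := by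
  rw [Pers, Measure.restrict_eq_self_of_ae_mem (s := UHP) (mem_ae_iff.2 hμ), wgt,
    withDensity_apply _ MeasurableSet.univ, Measure.restrict_univ]

lemma Pers_sub_Pers_restrict {p : ℝ} {μ : Measure Pt} {A : Set Pt} (hμ : MemMp p μ)
    (hA : MeasurableSet A) : Pers p μ - Pers p (μ.restrict A) = wgt p μ Aᶜ := by
  have hμA : μ.restrict A UHPᶜ = 0 := Measure.restrict_le_self.absolutelyContinuous hμ.1
  have hwgt : wgt p (μ.restrict A) = (wgt p μ).restrict A :=
    (restrict_withDensity hA _).symm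
  rw [Pers_eq_wgt_univ hμ.1, Pers_eq_wgt_univ hμA, hwgt, Measure.restrict_apply_univ,
    ← measure_add_measure_compl hA, ENNReal.add_sub_cancel_left]
  exact ne_top_of_le_ne_top (Pers_eq_wgt_univ hμ.1 ▸ hμ.2.ne) (measure_mono (subset_univ A))

lemma tendsto_wgt_persDist_le {p : ℝ} (hp : p ≠ 0) {μ : Measure Pt} (hμ : wgt p μ univ ≠ ⊤) :
    Tendsto (fun r => wgt p μ {x | persDist x ≤ r}) (𝓝[>] 0) (𝓝 0) := by
  have hmeas (r : ℝ) : MeasurableSet {x | persDist x ≤ r} :=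
    measurableSet_le continuous_persDist.measurable measurable_const
  have hlim := tendsto_measure_biInter_gt (μ := wgt p μ) (a := (0 : ℝ))
    (fun r _ => (hmeas r).nullMeasurableSet)
    (fun _ _ _ hij _ hx => le_trans hx hij)
    ⟨1, one_pos, ne_top_of_le_ne_top hμ (measure_mono (subset_univ _))⟩
  have hdiag : ⋂ r > (0 : ℝ), {x | persDist x ≤ r} = {x | persDist x ≤ 0} := by
    ext x
    simpa only [mem_iInter, mem_ofPred_eq] using forall_gt_imp_ge_iff_le_of_dense
  have hzero : wgt p μ {x | persDist x ≤ 0} = 0 := by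
    rw [wgt, withDensity_apply_eq_zero' (measurable_persDist_rpow p).aemeasurable]
    refine measure_mono_null (fun x ⟨hfx, hx⟩ => hfx ?_) measure_empty
    rw [show persDist x = 0 from le_antisymm hx infDist_nonneg, Real.zero_rpow hp,
      ENNReal.ofReal_zero]
  rwa [hdiag, hzero] at hlim

/-- for μ ∈ M^p and r > 0, letting μ⁽ʳ⁾ be the restriction of μ to
the points at distance > r from the diagonal, OT_p(μ⁽ʳ⁾,μ)^p ≤ Pers_p(μ) − Pers_p(μ⁽ʳ⁾),
and OT_p(μ⁽ʳ⁾,μ) → 0 as r → 0⁺. -/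
theorem stmt1 (p : ℝ) (hp : 1 ≤ p) (μ : Measure Pt) (hμ : MemMp p μ) :
    (∀ r : ℝ, 0 < r →
      OTe p (μ.restrict {x | r < persDist x}) μ ≤
        Pers p μ - Pers p (μ.restrict {x | r < persDist x})) ∧
    Tendsto (fun r : ℝ => OTe p (μ.restrict {x | r < persDist x}) μ)
      (𝓝[>] (0 : ℝ)) (𝓝 0) := by
  have hp₀ : p ≠ 0 := (zero_lt_one.trans_le hp).ne'
  have hmeas (r : ℝ) : MeasurableSet {x | r < persDist x} :=
    measurableSet_lt measurable_const continuous_persDist.measurable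
  have hcompl (r : ℝ) : {x | r < persDist x}ᶜ = {x | persDist x ≤ r} := by
    ext x; simp
  have hOT (r : ℝ) : OTe p (μ.restrict {x | r < persDist x}) μ ≤ wgt p μ {x | persDist x ≤ r} :=
    hcompl r ▸ OTe_restrict_le hp₀ hμ.1 (hmeas r)
  refine ⟨fun r _ => Pers_sub_Pers_restrict hμ (hmeas r) ▸ hcompl r ▸ hOT r, ?_⟩
  refine tendsto_of_tendsto_of_tendsto_of_le_of_le tendsto_const_nhds
    (tendsto_wgt_persDist_le hp₀ ?_) (fun _ => bot_le) hOT
  exact Pers_eq_wgt_univ hμ.1 ▸ hμ.2.ne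
end
end

section
/- The set D^p of persistence diagrams with finite p-th persistence is closed in (M^p, OT_p). -/
noncomputable section

open MeasureTheory Metric Set Filter Topology ENNReal
open scoped Classical

/-!
A diagram gives integer mass to every compact subset of Ω, and a plan of cost `C` moves mass at
most `C / δ ^ p` over distances larger than `δ`. Transporting cheaply from diagrams therefore
squeezes an integer between `μ (closedBall x a)` and `μ (closedBall x b)` whenever `a < b`.
Letting the radii shrink shows that `μ {x}` is an integer carrying all the mass of a small ball
around `x`, so the atoms of `μ` are locally finite in Ω and carry all of `μ`.
-/
section Transport

variable {α : Type*} [MeasurableSpace α]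

def HasMarginalsOn (U : Set α) (π : Measure (α × α)) (μ ν : Measure α) : Prop :=
  (∀ A, MeasurableSet A → A ⊆ U → π (A ×ˢ univ) = μ A) ∧
    (∀ B, MeasurableSet B → B ⊆ U → π (univ ×ˢ B) = ν B)

variable {U : Set α} {π : Measure (α × α)} {μ ν : Measure α}

lemma HasMarginalsOn.swap (h : HasMarginalsOn U π μ ν) :
    HasMarginalsOn U (π.map Prod.swap) ν μ := by
  refine ⟨fun A hA hAU => ?_, fun B hB hBU => ?_⟩
  · rw [Measure.map_apply measurable_swap (hA.prod .univ), preimage_swap_prod, h.2 A hA hAU]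
  · rw [Measure.map_apply measurable_swap (MeasurableSet.univ.prod hB), preimage_swap_prod,
      h.1 B hB hBU]

variable [PseudoMetricSpace α]

lemma lintegral_dist_map_swap (f : ℝ → ℝ≥0∞) (π : Measure (α × α)) :
    ∫⁻ z, f (dist z.1 z.2) ∂(π.map Prod.swap) = ∫⁻ z, f (dist z.1 z.2) ∂π := by
  rw [show Prod.swap = ⇑(MeasurableEquiv.prodComm : α × α ≃ᵐ α × α) from rfl,
    lintegral_map_equiv]
  exact lintegral_congr fun z => congrArg f (dist_comm _ _)

/-- Markov's inequality for the mass that a plan moves farther than `δ`. -/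
lemma HasMarginalsOn.measure_le_cthickening [OpensMeasurableSpace α] {p δ : ℝ} (hp : 0 ≤ p)
    (h : HasMarginalsOn U π μ ν) {A : Set α} (hA : MeasurableSet A) (hδ : 0 < δ)
    (hAU : cthickening δ A ⊆ U) :
    μ A ≤ ν (cthickening δ A) +
      (∫⁻ z, ENNReal.ofReal (dist z.1 z.2 ^ p) ∂π) / ENNReal.ofReal (δ ^ p) := by
  set S := A ×ˢ (cthickening δ A)ᶜ
  have hS : MeasurableSet S := hA.prod isClosed_cthickening.measurableSet.compl
  have hfar : ∀ z ∈ S, ENNReal.ofReal (δ ^ p) ≤ ENNReal.ofReal (dist z.1 z.2 ^ p) := by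
    rintro ⟨x, y⟩ ⟨hx, hy⟩
    have : δ < dist x y := by
      by_contra! hxy
      exact hy (mem_cthickening_of_dist_le y x δ A hx (dist_comm x y ▸ hxy))
    exact ENNReal.ofReal_le_ofReal (Real.rpow_le_rpow hδ.le this.le hp)
  have hmarkov : π S ≤ (∫⁻ z, ENNReal.ofReal (dist z.1 z.2 ^ p) ∂π) / ENNReal.ofReal (δ ^ p) := by
    rw [ENNReal.le_div_iff_mul_le (by simp [Real.rpow_pos_of_pos hδ]) (by simp), mul_comm,
      ← lintegral_indicator_const hS]
    refine lintegral_mono fun z => ?_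
    by_cases hz : z ∈ S
    · simpa [indicator_of_mem hz] using hfar z hz
    · simp [indicator_of_notMem hz]
  calc μ A = π (A ×ˢ univ) := (h.1 A hA (self_subset_cthickening A |>.trans hAU)).symm
    _ ≤ π (univ ×ˢ cthickening δ A ∪ S) := by
        refine measure_mono fun z hz => ?_
        by_cases hy : z.2 ∈ cthickening δ A
        · exact Or.inl ⟨trivial, hy⟩
        · exact Or.inr ⟨hz.1, hy⟩
    _ ≤ π (univ ×ˢ cthickening δ A) + π S := measure_union_le _ _
    _ ≤ _ := by
        rw [h.2 _ isClosed_cthickening.measurableSet hAU]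
        gcongr

end Transport

lemma ENNReal.exists_nat_mem_Icc_of_forall_pos {a b : ℝ≥0∞}
    (h : ∀ ε : ℝ≥0∞, 0 < ε → ∃ m : ℕ, a ≤ m + ε ∧ (m : ℝ≥0∞) ≤ b + ε) :
    ∃ m : ℕ, a ≤ m ∧ (m : ℝ≥0∞) ≤ b := by
  have ha : a ≠ ⊤ := by
    obtain ⟨m, hm, -⟩ := h 1 one_pos
    exact ne_top_of_le_ne_top (by simp) hm
  refine ⟨⌈a.toReal⌉₊, ?_, ?_⟩
  · calc a = ENNReal.ofReal a.toReal := (ENNReal.ofReal_toReal ha).symm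
      _ ≤ ENNReal.ofReal ⌈a.toReal⌉₊ := ENNReal.ofReal_le_ofReal (Nat.le_ceil _)
      _ = ⌈a.toReal⌉₊ := ENNReal.ofReal_natCast _
  -- otherwise an `ε` below both gaps around `b < ⌈a⌉₊` leaves no integer in `[a - ε, b + ε]`
  by_contra! hb
  have hbt : b ≠ ⊤ := hb.ne_top
  set m := ⌈a.toReal⌉₊
  have hbm : b.toReal < m := by
    simpa using (ENNReal.toReal_lt_toReal hbt (by simp)).2 hb
  have ham : (m : ℝ) < a.toReal + 1 := Nat.ceil_lt_add_one ENNReal.toReal_nonneg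
  obtain ⟨ε, hε, hεm⟩ := exists_between (lt_min (sub_pos.2 hbm) (sub_pos.2 ham))
  obtain ⟨hε1, hε2⟩ := lt_min_iff.1 hεm
  obtain ⟨m', h1, h2⟩ := h (ENNReal.ofReal ε) (by simpa using hε)
  have h1' : a.toReal ≤ m' + ε := by
    simpa [ENNReal.toReal_add, hε.le] using ENNReal.toReal_mono (by simp) h1
  have h2' : (m' : ℝ) ≤ b.toReal + ε := by
    simpa [ENNReal.toReal_add, hbt, hε.le] using ENNReal.toReal_mono (by simp [hbt]) h2
  have hm' : m' < m := by exact_mod_cast (show (m' : ℝ) < m by linarith)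
  have : (m' : ℝ) + 1 ≤ m := by exact_mod_cast hm'
  linarith

lemma Set.mul_indicator_one_apply {α R : Type*} [MulZeroOneClass R] {s : Set α} (f : α → R)
    (x : α) : f x * s.indicator 1 x = s.indicator f x := by
  by_cases hx : x ∈ s <;> simp [hx]

lemma MeasureTheory.Measure.eq_sum_smul_dirac_of_countable {α : Type*} [MeasurableSpace α]
    [MeasurableSingletonClass α] {μ : Measure α} {X : Set α} (hX : X.Countable)
    (hμX : μ Xᶜ = 0) :
    μ = Measure.sum (fun x : X => μ {x.1} • Measure.dirac x.1) := by
  ext A hA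
  have hXA : (X ∩ A).Countable := hX.mono inter_subset_left
  simp only [Measure.sum_apply _ hA, Measure.smul_apply, Measure.dirac_apply' _ hA, smul_eq_mul,
    Set.mul_indicator_one_apply (fun y => μ {y})]
  rw [tsum_subtype X, indicator_indicator, ← tsum_subtype (X ∩ A),
    ← measure_inter_conull (s := A) hμX, inter_comm]
  simpa using (tsum_measure_preimage_singleton (μ := μ) hXA (f := id)
    (fun y _ => measurableSet_singleton y)).symm

lemma IsDiagram.exists_nat_eq_of_isCompact {ν : Measure Pt} (hν : IsDiagram ν) {K : Set Pt}
    (hK : IsCompact K) (hKU : K ⊆ UHP) : ∃ m : ℕ, ν K = m := by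
  obtain ⟨X, n, -, hloc, rfl⟩ := hν
  have hfin : (X ∩ K).Finite := by
    refine hK.induction_on (p := fun s => (X ∩ s).Finite) (by simp)
      (fun s t hst ht => ht.subset (inter_subset_inter_right X hst))
      (fun s t hs ht => by simpa only [inter_union_distrib_left] using hs.union ht)
      (fun x hx => ?_)
    obtain ⟨U, hU, hUf⟩ := hloc x (hKU hx)
    exact ⟨U, mem_nhdsWithin_of_mem_nhds hU, hUf⟩
  have := hfin.fintype
  refine ⟨∑ x : ↑(X ∩ K), n x, ?_⟩
  simp only [Measure.sum_apply _ hK.isClosed.measurableSet, Measure.smul_apply,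
    Measure.dirac_apply' _ hK.isClosed.measurableSet, smul_eq_mul,
    Set.mul_indicator_one_apply (fun y => (n y : ℝ≥0∞))]
  rw [tsum_subtype X, indicator_indicator, ← tsum_subtype (X ∩ K), tsum_fintype, Nat.cast_sum]

lemma measure_singleton_eq_zero_of_measure_eq {α : Type*} [MeasurableSpace α]
    [MeasurableSingletonClass α] {μ : Measure α} {s : Set α} {x y : α} (hxs : x ∈ s)
    (hs : μ s = μ {x}) (hx : μ {x} ≠ ⊤) (hys : y ∈ s) (hyx : y ≠ x) : μ {y} = 0 := by
  refine measure_mono_null (singleton_subset_iff.2 (mem_sdiff_singleton.2 ⟨hys, hyx⟩)) ?_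
  rw [measure_sdiff (singleton_subset_iff.2 hxs) (measurableSet_singleton x).nullMeasurableSet hx,
    hs, tsub_self]

def ApproxByDiagrams (p : ℝ) (μ : Measure Pt) : Prop :=
  ∀ η : ℝ≥0∞, 0 < η → ∃ (ν : Measure Pt) (π : Measure (Pt × Pt)),
    IsDiagram ν ∧ HasMarginalsOn UHP π ν μ ∧ Cost p π < η

namespace ApproxByDiagrams

variable {p : ℝ} {μ : Measure Pt}

lemma exists_nat_between (hp : 0 ≤ p) (h : ApproxByDiagrams p μ) {x : Pt} {a b : ℝ}
    (ha : 0 ≤ a) (hab : a < b) (hb : closedBall x b ⊆ UHP) :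
    ∃ m : ℕ, μ (closedBall x a) ≤ m ∧ (m : ℝ≥0∞) ≤ μ (closedBall x b) := by
  refine ENNReal.exists_nat_mem_Icc_of_forall_pos fun ε hε => ?_
  set δ := (b - a) / 2
  have hδ : 0 < δ := half_pos (sub_pos.2 hab)
  obtain ⟨ν, π, hν, hπ, hcost⟩ := h (ε * ENNReal.ofReal (δ ^ p))
    (ENNReal.mul_pos hε.ne' (by simp [Real.rpow_pos_of_pos hδ]))
  have hcost' : Cost p π / ENNReal.ofReal (δ ^ p) ≤ ε := ENNReal.div_le_of_le_mul hcost.le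
  have hmid : cthickening δ (closedBall x a) = closedBall x (a + δ) := by
    rw [cthickening_closedBall hδ.le ha, add_comm]
  have hout : cthickening δ (closedBall x (a + δ)) = closedBall x b := by
    rw [cthickening_closedBall hδ.le (by linarith)]
    congr 1
    ring
  have houtU : cthickening δ (closedBall x (a + δ)) ⊆ UHP := by rwa [hout]
  have hmidU : closedBall x (a + δ) ⊆ UHP := (self_subset_cthickening _).trans houtU
  obtain ⟨m, hm⟩ := hν.exists_nat_eq_of_isCompact (isCompact_closedBall x (a + δ)) hmidU
  refine ⟨m, ?_, ?_⟩
  · have key := hπ.swap.measure_le_cthickening hp measurableSet_closedBall hδ (hmid ▸ hmidU)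
    rw [lintegral_dist_map_swap (fun t => ENNReal.ofReal (t ^ p)), hmid, hm] at key
    exact key.trans (add_le_add le_rfl hcost')
  · have key := hπ.measure_le_cthickening hp measurableSet_closedBall hδ houtU
    rw [hout, hm] at key
    exact key.trans (add_le_add le_rfl hcost')

lemma exists_closedBall_eq_atom (hp : 0 ≤ p) (h : ApproxByDiagrams p μ) {x : Pt}
    (hx : x ∈ UHP) : ∃ r > 0, ∃ n : ℕ, μ (closedBall x r) = n ∧ μ {x} = n := by
  obtain ⟨R, hR, hRU⟩ := nhds_basis_closedBall.mem_iff.1 (isOpen_UHP.mem_nhds hx)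
  have hsub : ∀ b < R, closedBall x b ⊆ UHP :=
    fun b hb => (closedBall_subset_closedBall hb.le).trans hRU
  obtain ⟨m₀, hm₀, -⟩ := h.exists_nat_between hp (half_pos hR).le (half_lt_self hR) hRU
  have hfin : μ {x} ≠ ⊤ :=
    ne_top_of_le_ne_top (ENNReal.natCast_ne_top m₀)
      ((measure_mono (singleton_subset_iff.2 (mem_closedBall_self (half_pos hR).le))).trans hm₀)
  -- once a ball has mass below `n + 1`, every integer squeezed under its mass is `n`
  set n := ⌊(μ {x}).toNNReal⌋₊
  have hn : (n : ℝ≥0∞) ≤ μ {x} := by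
    rw [← ENNReal.coe_toNNReal hfin]
    exact_mod_cast Nat.floor_le (μ {x}).toNNReal.coe_nonneg
  have hn1 : μ {x} < n + 1 := by
    rw [← ENNReal.coe_toNNReal hfin]
    exact_mod_cast Nat.lt_floor_add_one (μ {x}).toNNReal
  have htends : Tendsto (fun r => μ (cthickening r {x})) (𝓝[>] 0) (𝓝 (μ {x})) :=
    (tendsto_measure_cthickening_of_isClosed ⟨R / 2, half_pos hR, by
      rw [cthickening_singleton x (half_pos hR).le]
      exact ne_top_of_le_ne_top (ENNReal.natCast_ne_top m₀) hm₀⟩ isClosed_singleton).mono_left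
      nhdsWithin_le_nhds
  obtain ⟨b, hbn, hb0, hbR⟩ :=
    ((htends.eventually (gt_mem_nhds hn1)).and (Ioo_mem_nhdsGT hR)).exists
  rw [cthickening_singleton x hb0.le] at hbn
  have hle_n : ∀ m : ℕ, (m : ℝ≥0∞) ≤ μ (closedBall x b) → (m : ℝ≥0∞) ≤ n := fun m hm => by
    exact_mod_cast Nat.lt_succ_iff.1 (by exact_mod_cast hm.trans_lt hbn)
  obtain ⟨m₁, hm₁, hm₁b⟩ := h.exists_nat_between hp le_rfl hb0 (hsub b hbR)
  obtain ⟨m₂, hm₂, hm₂b⟩ := h.exists_nat_between hp (half_pos hb0).le (half_lt_self hb0)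
    (hsub b hbR)
  rw [closedBall_zero] at hm₁
  have hxn : μ {x} = n := le_antisymm (hm₁.trans (hle_n m₁ hm₁b)) hn
  refine ⟨b / 2, half_pos hb0, n, le_antisymm (hm₂.trans (hle_n m₂ hm₂b)) ?_, hxn⟩
  exact hxn ▸ measure_mono (singleton_subset_iff.2 (mem_closedBall_self (half_pos hb0).le))

lemma isDiagram (hp : 0 ≤ p) (h : ApproxByDiagrams p μ) (hμ : μ UHPᶜ = 0) : IsDiagram μ := by
  choose! r hr n hrn hn using fun x (hx : x ∈ UHP) => h.exists_closedBall_eq_atom hp hx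
  have hfin : ∀ x ∈ UHP, μ {x} ≠ ⊤ := fun x hx => hn x hx ▸ ENNReal.natCast_ne_top _
  have hiso : ∀ x ∈ UHP, ∀ y ∈ closedBall x (r x), μ {y} ≠ 0 → y = x := fun x hx y hy hy0 => by
    by_contra hyx
    exact hy0 (measure_singleton_eq_zero_of_measure_eq (mem_closedBall_self (hr x hx).le)
      ((hrn x hx).trans (hn x hx).symm) (hfin x hx) hy hyx)
  set X := {x ∈ UHP | μ {x} ≠ 0}
  obtain ⟨t, htU, htc, hcover⟩ := TopologicalSpace.countable_cover_nhdsWithin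
    (s := UHP) (f := fun x => closedBall x (r x))
    fun x hx => mem_nhdsWithin_of_mem_nhds (closedBall_mem_nhds x (hr x hx))
  have hXt : X ⊆ t := fun y ⟨hyU, hy0⟩ => by
    obtain ⟨x, hxt, hyx⟩ := mem_iUnion₂.1 (hcover hyU)
    exact hiso x (htU hxt) y hyx hy0 ▸ hxt
  have hnull : μ (UHP \ X) = 0 := measure_null_of_locally_null _ fun x ⟨hxU, hxX⟩ =>
    ⟨closedBall x (r x), mem_nhdsWithin_of_mem_nhds (closedBall_mem_nhds x (hr x hxU)),
      (hrn x hxU).trans ((hn x hxU).symm.trans (not_not.1 fun hx0 => hxX ⟨hxU, hx0⟩))⟩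
  have hXc : μ Xᶜ = 0 := measure_mono_null
    (fun y hy => (em (y ∈ UHP)).symm.imp id fun hyU => ⟨hyU, hy⟩) (measure_union_null hμ hnull)
  refine ⟨X, n, fun x hx => hx.1, fun x hx => ⟨closedBall x (r x),
    closedBall_mem_nhds x (hr x hx), (finite_singleton x).subset fun y ⟨hyX, hy⟩ =>
      hiso x hx y hy hyX.2⟩, ?_⟩
  conv_lhs => rw [Measure.eq_sum_smul_dirac_of_countable (htc.mono hXt) hXc]
  exact congrArg Measure.sum (funext fun x => by rw [hn x x.2.1])

end ApproxByDiagrams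

theorem stmt8_general (p : ℝ) (hp : 1 ≤ p) (μs : ℕ → Measure Pt) (μ : Measure Pt)
    (hd : ∀ n, IsDiagram (μs n)) (hμ : MemMp p μ)
    (hconv : Tendsto (fun n => OTe p (μs n) μ) atTop (𝓝 0)) :
    IsDiagram μ := by
  refine ApproxByDiagrams.isDiagram (zero_le_one.trans hp) (fun η hη => ?_) hμ.1
  obtain ⟨N, hN⟩ := (hconv.eventually (gt_mem_nhds hη)).exists
  simp only [OTe, iInf_lt_iff, exists_prop] at hN
  obtain ⟨π, ⟨-, hπ⟩, hcost⟩ := hN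
  exact ⟨μs N, π, hd N, hπ, hcost⟩

/-- D^p is closed in (M^p, OT_p): an OT_p-limit of persistence
diagrams in M^p is a persistence diagram. -/
theorem stmt8 (p : ℝ) (hp : 1 ≤ p) (μs : ℕ → Measure Pt) (μ : Measure Pt)
    (hd : ∀ n, IsDiagram (μs n)) (hmp : ∀ n, MemMp p (μs n)) (hμ : MemMp p μ)
    (hconv : Tendsto (fun n => OTe p (μs n) μ) atTop (𝓝 0)) :
    IsDiagram μ :=
  stmt8_general p hp μs μ hd hμ hconv
end
end

section
/- Let μ, ν be finite measures in M^p and r ≥ μ(Ω) + ν(Ω). Set μ̃ = μ + (r − μ(Ω))δ_∂Ω and ν̃ = ν + (r − ν(Ω))δ_∂Ω, measures of common mass r on the quotient space Ω̃ = Ω ⊔ {∂Ω} with metric ρ(x,y) = min{d(x,y), d(x,∂Ω)+d(y,∂Ω)}. Then OT_p(μ,ν) = W_{p,ρ}(μ̃, ν̃), where W_{p,ρ} is the p-Wasserstein distance on (Ω̃, ρ) between measures of equal mass. -/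
noncomputable section

open MeasureTheory Metric Set Filter Topology ENNReal
open scoped Classical

/-! Both inequalities come from transporting plans. An admissible partial plan `π`, restricted
to `E_Ω`, with `∂Ω` collapsed to the point `mk2 0 0` and the missing mass `r - π E_Ω` put on
`(mk2 0 0, mk2 0 0)`, is a coupling of `μ̃` and `ν̃`; its `ρ`-cost is at most the cost of `π`
because `ρ ≤ d` off `∂Ω × ∂Ω`. Conversely, a coupling of `μ̃` and `ν̃` becomes an admissible plan
by keeping the pairs with `d(x, y) ≤ d(x, ∂Ω) + d(y, ∂Ω)` (a collapsed endpoint being replaced by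
the projection of its partner onto `∂Ω`) and splitting every other pair into the two moves
`x ↦ proj x` and `proj y ↦ y`; it costs at most the `ρ`-cost since `a^p + b^p ≤ (a + b)^p`
for `p ≥ 1`. -/

lemma disjoint_UHP_Diag : Disjoint UHP Diag :=
  disjoint_left.2 fun _ hx hx' => hx.ne hx'

lemma notMem_Diag_of_mem_UHP {x : Pt} (hx : x ∈ UHP) : x ∉ Diag :=
  disjoint_left.1 disjoint_UHP_Diag hx

lemma origin_mem_Diag : mk2 0 0 ∈ Diag := rfl

lemma measurableSet_UHP : MeasurableSet UHP := isOpen_UHP.measurableSet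

lemma measurableSet_Diag : MeasurableSet Diag := isClosed_Diag.measurableSet

lemma measurableSet_EOm : MeasurableSet EOm :=
  (measurableSet_UHPbar.prod measurableSet_UHPbar).diff (measurableSet_Diag.prod measurableSet_Diag)

lemma EOm_eq_union_fst : EOm = UHP ×ˢ UHPbar ∪ Diag ×ˢ UHP := by
  ext ⟨x, y⟩
  have hx := @notMem_Diag_of_mem_UHP x
  have hy := @notMem_Diag_of_mem_UHP y
  simp only [EOm, UHPbar, Set.mem_sdiff, mem_prod, mem_union]
  tauto

lemma EOm_eq_union_snd : EOm = UHPbar ×ˢ UHP ∪ UHP ×ˢ Diag := by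
  ext ⟨x, y⟩
  have hx := @notMem_Diag_of_mem_UHP x
  have hy := @notMem_Diag_of_mem_UHP y
  simp only [EOm, UHPbar, Set.mem_sdiff, mem_prod, mem_union]
  tauto

def projDiag (x : Pt) : Pt := mk2 ((x 0 + x 1) / 2) ((x 0 + x 1) / 2)

lemma projDiag_mem_Diag (x : Pt) : projDiag x ∈ Diag := rfl

@[fun_prop]
lemma continuous_projDiag : Continuous projDiag := by
  refine (PiLp.continuous_toLp 2 _).comp (continuous_pi fun i => ?_)
  fin_cases i <;>
    simp only [Fin.zero_eta, Fin.mk_one, Matrix.cons_val_zero, Matrix.cons_val_one] <;> fun_prop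

lemma persDist_eq_dist_projDiag (x : Pt) : persDist x = dist x (projDiag x) := by
  refine le_antisymm (infDist_le_dist_of_mem (projDiag_mem_Diag x))
    ((le_infDist ⟨_, projDiag_mem_Diag x⟩).2 fun y (hy : y 0 = y 1) => ?_)
  simp only [EuclideanSpace.dist_eq, Fin.sum_univ_two, Real.dist_eq, sq_abs]
  refine Real.sqrt_le_sqrt ?_
  show (x 0 - (x 0 + x 1) / 2) ^ 2 + (x 1 - (x 0 + x 1) / 2) ^ 2 ≤ _
  rw [← hy]
  nlinarith [sq_nonneg (x 0 + x 1 - 2 * y 0)]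

lemma persDist_nonneg (x : Pt) : 0 ≤ persDist x := infDist_nonneg

lemma rhoP_nonneg (x y : Pt) : 0 ≤ ρP x y := by
  unfold ρP
  split_ifs
  exacts [le_rfl, persDist_nonneg y, persDist_nonneg x,
    le_min dist_nonneg (add_nonneg (persDist_nonneg x) (persDist_nonneg y))]

lemma measurable_rhoP : Measurable fun z : Pt × Pt => ρP z.1 z.2 := by
  have hpers : Continuous persDist := continuous_infDist_pt _
  unfold ρP
  refine Measurable.ite (measurable_fst measurableSet_Diag)
    (Measurable.ite (measurable_snd measurableSet_Diag) measurable_const ?_)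
    (Measurable.ite (measurable_snd measurableSet_Diag) ?_ ?_) <;> fun_prop


section Collapse

def collapseDiag (x : Pt) : Pt := if x ∈ Diag then mk2 0 0 else x

lemma measurable_collapseDiag : Measurable collapseDiag :=
  Measurable.ite measurableSet_Diag measurable_const measurable_id

lemma collapseDiag_of_mem_UHP {x : Pt} (hx : x ∈ UHP) : collapseDiag x = x :=
  if_neg (notMem_Diag_of_mem_UHP hx)

lemma rhoP_collapseDiag_le_dist {x y : Pt} (h : ¬(x ∈ Diag ∧ y ∈ Diag)) :
    ρP (collapseDiag x) (collapseDiag y) ≤ dist x y := by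
  by_cases hx : x ∈ Diag <;> by_cases hy : y ∈ Diag <;>
    simp only [ρP, collapseDiag, hx, hy, origin_mem_Diag, if_true, if_false]
  · exact absurd ⟨hx, hy⟩ h
  · exact dist_comm x y ▸ infDist_le_dist_of_mem hx
  · exact infDist_le_dist_of_mem hy
  · exact min_le_left _ _

variable {μ ν : Measure Pt} {π : Measure (Pt × Pt)}

lemma map_fst_restrict_of_mem_Adm (hπ : π ∈ Adm μ ν) (hμ : μ UHPᶜ = 0) :
    (π.restrict (UHP ×ˢ UHPbar)).map Prod.fst = μ := by
  ext A hA
  have hset : Prod.fst ⁻¹' A ∩ UHP ×ˢ UHPbar = (A ∩ UHP) ×ˢ univ ∩ UHPbar ×ˢ UHPbar := by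
    ext ⟨x, y⟩
    simp only [mem_inter_iff, mem_preimage, mem_prod, mem_univ, UHPbar, mem_union]
    tauto
  rw [Measure.map_apply measurable_fst hA, Measure.restrict_apply (measurable_fst hA), hset,
    measure_inter_conull hπ.1, hπ.2.1 _ (hA.inter measurableSet_UHP) inter_subset_right,
    measure_inter_conull hμ]

lemma map_snd_restrict_of_mem_Adm (hπ : π ∈ Adm μ ν) (hν : ν UHPᶜ = 0) :
    (π.restrict (UHPbar ×ˢ UHP)).map Prod.snd = ν := by
  ext B hB
  have hset : Prod.snd ⁻¹' B ∩ UHPbar ×ˢ UHP = univ ×ˢ (B ∩ UHP) ∩ UHPbar ×ˢ UHPbar := by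
    ext ⟨x, y⟩
    simp only [mem_inter_iff, mem_preimage, mem_prod, mem_univ, UHPbar, mem_union]
    tauto
  rw [Measure.map_apply measurable_snd hB, Measure.restrict_apply (measurable_snd hB), hset,
    measure_inter_conull hπ.1, hπ.2.2 _ (hB.inter measurableSet_UHP) inter_subset_right,
    measure_inter_conull hν]

lemma map_collapseDiag_comp_restrict_union {f : Pt × Pt → Pt} (hf : Measurable f)
    {s t : Set (Pt × Pt)} (hst : Disjoint s t) (hs : MeasurableSet s) (ht : MeasurableSet t)
    (hfs : ∀ z ∈ s, f z ∈ UHP) (hft : ∀ z ∈ t, f z ∈ Diag) :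
    (π.restrict (s ∪ t)).map (collapseDiag ∘ f)
      = (π.restrict s).map f + π t • Measure.dirac (mk2 0 0) := by
  rw [Measure.restrict_union hst ht, Measure.map_add _ _ (measurable_collapseDiag.comp hf)]
  congr 1
  · exact Measure.map_congr ((ae_restrict_iff' hs).2 (ae_of_all _ fun z hz =>
      collapseDiag_of_mem_UHP (hfs z hz)))
  · have hconst : collapseDiag ∘ f =ᵐ[π.restrict t] fun _ => mk2 0 0 :=
      (ae_restrict_iff' ht).2 (ae_of_all _ fun z hz => if_pos (hft z hz))
    rw [Measure.map_congr hconst, Measure.map_const, Measure.restrict_apply_univ]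

def couplingOf (r : ℝ≥0∞) (π : Measure (Pt × Pt)) : Measure (Pt × Pt) :=
  (π.restrict EOm).map (Prod.map collapseDiag collapseDiag)
    + (r - π EOm) • Measure.dirac (mk2 0 0, mk2 0 0)

lemma measurable_prodMap_collapseDiag : Measurable (Prod.map collapseDiag collapseDiag) :=
  measurable_collapseDiag.prodMap measurable_collapseDiag

variable {r : ℝ≥0∞}

lemma map_fst_couplingOf (hπ : π ∈ Adm μ ν) (hμ : μ UHPᶜ = 0) (hμf : μ univ ≠ ⊤)
    (hr : μ univ + ν univ ≤ r) :
    (couplingOf r π).map Prod.fst = μ + (r - μ univ) • Measure.dirac (mk2 0 0) := by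
  have hdisj : Disjoint (UHP ×ˢ UHPbar) (Diag ×ˢ UHP) := disjoint_prod.2 (Or.inl disjoint_UHP_Diag)
  have hmeas : MeasurableSet (Diag ×ˢ UHP) := measurableSet_Diag.prod measurableSet_UHP
  have hmarg := map_fst_restrict_of_mem_Adm hπ hμ
  have hmass : π (UHP ×ˢ UHPbar) = μ univ := by
    rw [← Measure.restrict_apply_univ, ← hmarg, Measure.map_apply measurable_fst .univ,
      preimage_univ]
  have hdiag : π (Diag ×ˢ UHP) ≤ ν univ :=
    calc π (Diag ×ˢ UHP) ≤ π (univ ×ˢ UHP) := measure_mono (prod_mono (subset_univ _) le_rfl)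
      _ = ν UHP := hπ.2.2 _ measurableSet_UHP le_rfl
      _ ≤ ν univ := measure_mono (subset_univ _)
  have hscalar : π (Diag ×ˢ UHP) + (r - π EOm) = r - μ univ := by
    rw [EOm_eq_union_fst, measure_union hdisj hmeas, hmass, tsub_add_eq_tsub_tsub]
    exact add_tsub_cancel_of_le
      (ENNReal.le_sub_of_add_le_left hμf ((add_le_add_right hdiag _).trans hr))
  rw [couplingOf, Measure.map_add _ _ measurable_fst, Measure.map_smul, Measure.map_dirac,
    Measure.map_map measurable_fst measurable_prodMap_collapseDiag]
  nth_rw 1 [EOm_eq_union_fst]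
  rw [show Prod.fst ∘ Prod.map collapseDiag collapseDiag = collapseDiag ∘ Prod.fst from rfl,
    map_collapseDiag_comp_restrict_union measurable_fst hdisj
      (measurableSet_UHP.prod measurableSet_UHPbar) hmeas (fun z hz => hz.1) (fun z hz => hz.1),
    hmarg, add_assoc, ← add_smul, hscalar]

lemma map_snd_couplingOf (hπ : π ∈ Adm μ ν) (hν : ν UHPᶜ = 0) (hνf : ν univ ≠ ⊤)
    (hr : μ univ + ν univ ≤ r) :
    (couplingOf r π).map Prod.snd = ν + (r - ν univ) • Measure.dirac (mk2 0 0) := by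
  have hdisj : Disjoint (UHPbar ×ˢ UHP) (UHP ×ˢ Diag) := disjoint_prod.2 (Or.inr disjoint_UHP_Diag)
  have hmeas : MeasurableSet (UHP ×ˢ Diag) := measurableSet_UHP.prod measurableSet_Diag
  have hmarg := map_snd_restrict_of_mem_Adm hπ hν
  have hmass : π (UHPbar ×ˢ UHP) = ν univ := by
    rw [← Measure.restrict_apply_univ, ← hmarg, Measure.map_apply measurable_snd .univ,
      preimage_univ]
  have hdiag : π (UHP ×ˢ Diag) ≤ μ univ :=
    calc π (UHP ×ˢ Diag) ≤ π (UHP ×ˢ univ) := measure_mono (prod_mono le_rfl (subset_univ _))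
      _ = μ UHP := hπ.2.1 _ measurableSet_UHP le_rfl
      _ ≤ μ univ := measure_mono (subset_univ _)
  have hscalar : π (UHP ×ˢ Diag) + (r - π EOm) = r - ν univ := by
    have hr' : ν univ + μ univ ≤ r := (add_comm _ _).trans_le hr
    rw [EOm_eq_union_snd, measure_union hdisj hmeas, hmass, tsub_add_eq_tsub_tsub]
    exact add_tsub_cancel_of_le
      (ENNReal.le_sub_of_add_le_left hνf ((add_le_add_right hdiag _).trans hr'))
  rw [couplingOf, Measure.map_add _ _ measurable_snd, Measure.map_smul, Measure.map_dirac,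
    Measure.map_map measurable_snd measurable_prodMap_collapseDiag]
  nth_rw 1 [EOm_eq_union_snd]
  rw [show Prod.snd ∘ Prod.map collapseDiag collapseDiag = collapseDiag ∘ Prod.snd from rfl,
    map_collapseDiag_comp_restrict_union measurable_snd hdisj
      (measurableSet_UHPbar.prod measurableSet_UHP) hmeas (fun z hz => hz.2) (fun z hz => hz.2),
    hmarg, add_assoc, ← add_smul, hscalar]

lemma lintegral_rhoP_couplingOf_le {p : ℝ} (hp : 0 < p) (r : ℝ≥0∞) (π : Measure (Pt × Pt)) :
    ∫⁻ z, ENNReal.ofReal (ρP z.1 z.2 ^ p) ∂(couplingOf r π) ≤ Cost p π := by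
  have hρ : ρP (mk2 0 0) (mk2 0 0) = 0 := by simp [ρP, origin_mem_Diag]
  rw [couplingOf, lintegral_add_measure, lintegral_smul_measure, lintegral_dirac, hρ,
    Real.zero_rpow hp.ne', ENNReal.ofReal_zero, smul_zero, add_zero,
    lintegral_map (measurable_rhoP.pow_const p).ennreal_ofReal measurable_prodMap_collapseDiag]
  calc _ ≤ ∫⁻ z in EOm, ENNReal.ofReal (dist z.1 z.2 ^ p) ∂π :=
        setLIntegral_mono' measurableSet_EOm fun z hz => ENNReal.ofReal_le_ofReal
          (Real.rpow_le_rpow (rhoP_nonneg _ _) (rhoP_collapseDiag_le_dist hz.2) hp.le)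
    _ ≤ Cost p π := setLIntegral_le_lintegral _ _

lemma WpE_le_OTe {p : ℝ} (hp : 0 < p) (hμ : μ UHPᶜ = 0) (hν : ν UHPᶜ = 0) (hμf : μ univ ≠ ⊤)
    (hνf : ν univ ≠ ⊤) (hr : μ univ + ν univ ≤ r) :
    WpE p (μ + (r - μ univ) • Measure.dirac (mk2 0 0))
      (ν + (r - ν univ) • Measure.dirac (mk2 0 0)) ≤ OTe p μ ν :=
  le_iInf₂ fun π hπ => iInf₂_le_of_le (couplingOf r π)
    ⟨map_fst_couplingOf hπ hμ hμf hr, map_snd_couplingOf hπ hν hνf hr⟩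
    (lintegral_rhoP_couplingOf_le hp r π)

end Collapse

section PartialPlan

def throughDiag : Set (Pt × Pt) :=
  {z | z.1 ∈ UHP ∧ z.2 ∈ UHP ∧ persDist z.1 + persDist z.2 < dist z.1 z.2}

def liftDiagPair (z : Pt × Pt) : Pt × Pt :=
  (if z.1 ∈ Diag then projDiag z.2 else z.1, if z.2 ∈ Diag then projDiag z.1 else z.2)

def partialPlanOf (π : Measure (Pt × Pt)) : Measure (Pt × Pt) :=
  (π.restrict throughDiag).map (fun z => (z.1, projDiag z.1))
    + (π.restrict throughDiag).map (fun z => (projDiag z.2, z.2))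
    + (π.restrict throughDiagᶜ).map liftDiagPair

lemma measurableSet_throughDiag : MeasurableSet throughDiag := by
  have hpers : Continuous persDist := continuous_infDist_pt _
  exact ((isOpen_UHP.preimage continuous_fst).inter ((isOpen_UHP.preimage continuous_snd).inter
    (isOpen_lt (by fun_prop : Continuous fun z : Pt × Pt => persDist z.1 + persDist z.2)
      continuous_dist))).measurableSet

lemma measurable_liftDiagPair : Measurable liftDiagPair :=
  (Measurable.ite (measurable_fst measurableSet_Diag) (by fun_prop) measurable_fst).prodMk
    (Measurable.ite (measurable_snd measurableSet_Diag) (by fun_prop) measurable_snd)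

lemma rhoP_of_mem_throughDiag {z : Pt × Pt} (hz : z ∈ throughDiag) :
    ρP z.1 z.2 = persDist z.1 + persDist z.2 := by
  simp only [ρP, notMem_Diag_of_mem_UHP hz.1, notMem_Diag_of_mem_UHP hz.2.1, if_false,
    min_eq_right hz.2.2.le]

lemma dist_liftDiagPair {z : Pt × Pt} (h1 : z.1 ∈ insert (mk2 0 0) UHP)
    (h2 : z.2 ∈ insert (mk2 0 0) UHP) (hz : z ∉ throughDiag) :
    dist (liftDiagPair z).1 (liftDiagPair z).2 = ρP z.1 z.2 := by
  obtain ⟨x, y⟩ := z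
  rcases h1 with rfl | hx <;> rcases h2 with rfl | hy
  · simp [liftDiagPair, ρP, origin_mem_Diag]
  · simp [liftDiagPair, ρP, origin_mem_Diag, notMem_Diag_of_mem_UHP hy, persDist_eq_dist_projDiag,
      dist_comm]
  · simp [liftDiagPair, ρP, origin_mem_Diag, notMem_Diag_of_mem_UHP hx, persDist_eq_dist_projDiag]
  · have hd : dist x y ≤ persDist x + persDist y := not_lt.1 fun h => hz ⟨hx, hy, h⟩
    simp [liftDiagPair, ρP, notMem_Diag_of_mem_UHP hx, notMem_Diag_of_mem_UHP hy, min_eq_left hd]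

variable {μ ν : Measure Pt} {π : Measure (Pt × Pt)}

lemma ae_mem_insert_origin (hμ : μ UHPᶜ = 0) (c : ℝ≥0∞) :
    ∀ᵐ x ∂(μ + c • Measure.dirac (mk2 0 0)), x ∈ insert (mk2 0 0) UHP := by
  rw [ae_add_measure_iff]
  exact ⟨ae_iff.2 (measure_mono_null (fun x hx => hx ∘ Or.inr) hμ),
    Measure.ae_smul_measure ((ae_dirac_iff (measurableSet_UHP.insert _)).2 (mem_insert _ _)) c⟩

lemma add_smul_dirac_origin_apply (c : ℝ≥0∞) {A : Set Pt} (hA : MeasurableSet A)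
    (hAU : A ⊆ UHP) : (μ + c • Measure.dirac (mk2 0 0)) A = μ A := by
  rw [Measure.add_apply, Measure.smul_apply, Measure.dirac_apply' _ hA,
    indicator_of_notMem fun h => notMem_Diag_of_mem_UHP (hAU h) origin_mem_Diag, smul_zero,
    add_zero]

variable {c d : ℝ≥0∞}

lemma ae_mem_of_mem_Coup (hμ : μ UHPᶜ = 0) (hν : ν UHPᶜ = 0)
    (hπ : π ∈ Coup (μ + c • Measure.dirac (mk2 0 0)) (ν + d • Measure.dirac (mk2 0 0))) :
    ∀ᵐ z ∂π, z.1 ∈ insert (mk2 0 0) UHP ∧ z.2 ∈ insert (mk2 0 0) UHP := by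
  have h1 := ae_of_ae_map measurable_fst.aemeasurable (hπ.1 ▸ ae_mem_insert_origin hμ c)
  have h2 := ae_of_ae_map measurable_snd.aemeasurable (hπ.2 ▸ ae_mem_insert_origin hν d)
  filter_upwards [h1, h2] with z h1 h2 using ⟨h1, h2⟩

lemma ae_mem_partialPlanOf
    (hG : ∀ᵐ z ∂π, z.1 ∈ insert (mk2 0 0) UHP ∧ z.2 ∈ insert (mk2 0 0) UHP) :
    ∀ᵐ z ∂partialPlanOf π, z ∈ UHPbar ×ˢ UHPbar := by
  have hm : MeasurableSet (UHPbar ×ˢ UHPbar) := measurableSet_UHPbar.prod measurableSet_UHPbar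
  have hGbar : insert (mk2 0 0) UHP ⊆ UHPbar :=
    insert_subset (Or.inr origin_mem_Diag) subset_union_left
  have hlift : ∀ x y, x ∈ insert (mk2 0 0) UHP → (if x ∈ Diag then projDiag y else x) ∈ UHPbar :=
    fun x y hx => by split_ifs; exacts [Or.inr (projDiag_mem_Diag y), hGbar hx]
  simp only [partialPlanOf, ae_add_measure_iff]
  refine ⟨⟨?_, ?_⟩, ?_⟩
  · exact (ae_map_iff (by fun_prop) hm).2
      (ae_restrict_of_ae (hG.mono fun z hz => ⟨hGbar hz.1, Or.inr (projDiag_mem_Diag _)⟩))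
  · exact (ae_map_iff (by fun_prop) hm).2
      (ae_restrict_of_ae (hG.mono fun z hz => ⟨Or.inr (projDiag_mem_Diag _), hGbar hz.2⟩))
  · exact (ae_map_iff measurable_liftDiagPair.aemeasurable hm).2
      (ae_restrict_of_ae (hG.mono fun z hz => ⟨hlift _ _ hz.1, hlift _ _ hz.2⟩))

lemma partialPlanOf_prod_univ (hπ : π.map Prod.fst = μ + c • Measure.dirac (mk2 0 0))
    {A : Set Pt} (hA : MeasurableSet A) (hAU : A ⊆ UHP) : partialPlanOf π (A ×ˢ univ) = μ A := by
  have hAD : ∀ x ∈ A, x ∉ Diag := fun x hx => notMem_Diag_of_mem_UHP (hAU hx)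
  have hA' : MeasurableSet (A ×ˢ (univ : Set Pt)) := hA.prod .univ
  have hproj : (fun z : Pt × Pt => (projDiag z.2, z.2)) ⁻¹' (A ×ˢ univ) = ∅ :=
    eq_empty_of_forall_notMem fun z hz => hAD _ hz.1 (projDiag_mem_Diag _)
  have hlift : liftDiagPair ⁻¹' (A ×ˢ univ) = A ×ˢ univ := by
    ext ⟨x, y⟩
    by_cases hx : x ∈ Diag
    · simp only [liftDiagPair, hx, if_true, mem_preimage, mem_prod, mem_univ, and_true]
      exact iff_of_false (hAD _ · (projDiag_mem_Diag y)) (hAD _ · hx)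
    · simp [liftDiagPair, hx]
  rw [partialPlanOf, Measure.add_apply, Measure.add_apply, Measure.map_apply (by fun_prop) hA',
    Measure.map_apply (by fun_prop) hA', Measure.map_apply measurable_liftDiagPair hA', hproj,
    hlift, measure_empty, add_zero, show (fun z : Pt × Pt => (z.1, projDiag z.1)) ⁻¹' (A ×ˢ univ)
      = A ×ˢ univ from rfl, ← Measure.add_apply, Measure.restrict_add_restrict_compl
    measurableSet_throughDiag, prod_univ, ← Measure.map_apply measurable_fst hA, hπ,
    add_smul_dirac_origin_apply c hA hAU]

lemma partialPlanOf_univ_prod (hπ : π.map Prod.snd = ν + d • Measure.dirac (mk2 0 0))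
    {B : Set Pt} (hB : MeasurableSet B) (hBU : B ⊆ UHP) : partialPlanOf π (univ ×ˢ B) = ν B := by
  have hBD : ∀ x ∈ B, x ∉ Diag := fun x hx => notMem_Diag_of_mem_UHP (hBU hx)
  have hB' : MeasurableSet ((univ : Set Pt) ×ˢ B) := MeasurableSet.univ.prod hB
  have hproj : (fun z : Pt × Pt => (z.1, projDiag z.1)) ⁻¹' (univ ×ˢ B) = ∅ :=
    eq_empty_of_forall_notMem fun z hz => hBD _ hz.2 (projDiag_mem_Diag _)
  have hlift : liftDiagPair ⁻¹' (univ ×ˢ B) = univ ×ˢ B := by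
    ext ⟨x, y⟩
    by_cases hy : y ∈ Diag
    · simp only [liftDiagPair, hy, if_true, mem_preimage, mem_prod, mem_univ, true_and]
      exact iff_of_false (hBD _ · (projDiag_mem_Diag x)) (hBD _ · hy)
    · simp [liftDiagPair, hy]
  rw [partialPlanOf, Measure.add_apply, Measure.add_apply, Measure.map_apply (by fun_prop) hB',
    Measure.map_apply (by fun_prop) hB', Measure.map_apply measurable_liftDiagPair hB', hproj,
    hlift, measure_empty, zero_add, show (fun z : Pt × Pt => (projDiag z.2, z.2)) ⁻¹' (univ ×ˢ B)
      = univ ×ˢ B from rfl, ← Measure.add_apply, Measure.restrict_add_restrict_compl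
    measurableSet_throughDiag, univ_prod, ← Measure.map_apply measurable_snd hB, hπ,
    add_smul_dirac_origin_apply d hB hBU]

lemma partialPlanOf_mem_Adm (hμ : μ UHPᶜ = 0) (hν : ν UHPᶜ = 0)
    (hπ : π ∈ Coup (μ + c • Measure.dirac (mk2 0 0)) (ν + d • Measure.dirac (mk2 0 0))) :
    partialPlanOf π ∈ Adm μ ν :=
  ⟨ae_iff.1 (ae_mem_partialPlanOf (ae_mem_of_mem_Coup hμ hν hπ)),
    fun _ hA hAU => partialPlanOf_prod_univ hπ.1 hA hAU,
    fun _ hB hBU => partialPlanOf_univ_prod hπ.2 hB hBU⟩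

lemma Cost_partialPlanOf_le {p : ℝ} (hp : 1 ≤ p)
    (hG : ∀ᵐ z ∂π, z.1 ∈ insert (mk2 0 0) UHP ∧ z.2 ∈ insert (mk2 0 0) UHP) :
    Cost p (partialPlanOf π) ≤ ∫⁻ z, ENNReal.ofReal (ρP z.1 z.2 ^ p) ∂π := by
  have hF : Measurable fun z : Pt × Pt => ENNReal.ofReal (dist z.1 z.2 ^ p) := by fun_prop
  rw [Cost, partialPlanOf, lintegral_add_measure, lintegral_add_measure,
    lintegral_map hF (by fun_prop), lintegral_map hF (by fun_prop),
    lintegral_map hF measurable_liftDiagPair, ← lintegral_add_left (by fun_prop)]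
  refine (add_le_add ?_ ?_).trans_eq (lintegral_add_compl _ measurableSet_throughDiag)
  · refine setLIntegral_mono' measurableSet_throughDiag fun z hz => ?_
    simp only [rhoP_of_mem_throughDiag hz, ← persDist_eq_dist_projDiag, dist_comm (projDiag _)]
    rw [← ENNReal.ofReal_add (Real.rpow_nonneg (persDist_nonneg _) _)
      (Real.rpow_nonneg (persDist_nonneg _) _)]
    exact ENNReal.ofReal_le_ofReal
      (Real.add_rpow_le_rpow_add (persDist_nonneg _) (persDist_nonneg _) hp)
  · refine lintegral_mono_ae ?_
    filter_upwards [ae_restrict_of_ae hG, ae_restrict_mem measurableSet_throughDiag.compl]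
      with z hzG hz
    rw [dist_liftDiagPair hzG.1 hzG.2 hz]

lemma OTe_le_WpE {p : ℝ} (hp : 1 ≤ p) (hμ : μ UHPᶜ = 0) (hν : ν UHPᶜ = 0) (c d : ℝ≥0∞) :
    OTe p μ ν ≤ WpE p (μ + c • Measure.dirac (mk2 0 0)) (ν + d • Measure.dirac (mk2 0 0)) :=
  le_iInf₂ fun π hπ => iInf₂_le_of_le (partialPlanOf π) (partialPlanOf_mem_Adm hμ hν hπ)
    (Cost_partialPlanOf_le hp (ae_mem_of_mem_Coup hμ hν hπ))

end PartialPlan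

theorem stmt12_general (p : ℝ) (hp : 1 ≤ p) (μ ν : Measure Pt)
    (hμ : MemMp p μ) (hν : MemMp p ν)
    (hμf : μ univ < ⊤) (hνf : ν univ < ⊤)
    (r : ℝ≥0∞) (hr : μ univ + ν univ ≤ r) :
    OTe p μ ν ^ (1 / p) =
      (WpE p (μ + (r - μ univ) • Measure.dirac (mk2 0 0))
             (ν + (r - ν univ) • Measure.dirac (mk2 0 0))) ^ (1 / p) := by
  rw [le_antisymm (OTe_le_WpE hp hμ.1 hν.1 _ _)
    (WpE_le_OTe (by linarith) hμ.1 hν.1 hμf.ne hνf.ne hr)]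

/-- for finite measures μ,ν ∈ M^p and r ≥ μ(Ω)+ν(Ω),
OT_p(μ,ν) = W_{p,ρ}(μ̃,ν̃) where μ̃ = μ + (r−μ(Ω))δ_∂Ω, ν̃ = ν + (r−ν(Ω))δ_∂Ω
are measures of common mass r on the quotient Ω̃ (with the diagonal collapsed
to the point mk2 0 0). -/
theorem stmt12 (p : ℝ) (hp : 1 ≤ p) (μ ν : Measure Pt)
    (hμ : MemMp p μ) (hν : MemMp p ν)
    (hμf : μ univ < ⊤) (hνf : ν univ < ⊤)
    (r : ℝ≥0∞) (hr : μ univ + ν univ ≤ r) (hrf : r < ⊤) :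
    OTe p μ ν ^ (1 / p) =
      (WpE p (μ + (r - μ univ) • Measure.dirac (mk2 0 0))
             (ν + (r - ν univ) • Measure.dirac (mk2 0 0))) ^ (1 / p) :=
  stmt12_general p hp μ ν hμ hν hμf hνf r hr
end
end

section
/- The space (D^∞, OT_∞) of persistence diagrams with bounded persistence, equipped with the bottleneck distance, is not separable: the family {a_I = Σ_{i∈I} δ_{(i,i+1)} : I ⊂ ℕ} is uncountable and OT_∞(a_I, a_{I'}) = √2/2 for any two distinct subsets I ≠ I' of ℕ. -/
noncomputable section

open MeasureTheory Metric Set Filter Topology ENNReal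
open scoped Classical

/-- The diagram a_I = Σ_{i ∈ I} δ_{(i,i+1)}. -/
def aI (I : Set ℕ) : Measure Pt :=
  Measure.sum (fun i : I => Measure.dirac (mk2 (i.1 : ℝ) ((i.1 : ℝ) + 1)))

/-!
The points `(i, i + 1)` of the diagrams `a_I` lie at distance `√2/2` from the diagonal and at
distance at least `1` from each other. Sending every point to its orthogonal projection onto the
diagonal is an admissible plan of bottleneck cost `√2/2`. Conversely, if `i ∈ I \ J`, a plan of
cost `< √2/2` must carry the mass at `(i, i + 1)` strictly closer than `√2/2`, hence neither to the
diagonal nor to a point of `a_J`, contradicting the second marginal constraint. Distinct `I` give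
distinct `a_I`, and Cantor's theorem makes the family uncountable.
-/

@[simp] lemma mk2_apply_zero (a b : ℝ) : mk2 a b 0 = a := rfl
@[simp] lemma mk2_apply_one (a b : ℝ) : mk2 a b 1 = b := rfl

lemma dist_eq_sqrt (x y : Pt) : dist x y = √((x 0 - y 0) ^ 2 + (x 1 - y 1) ^ 2) := by
  rw [EuclideanSpace.dist_eq, Fin.sum_univ_two, Real.dist_eq, Real.dist_eq, sq_abs, sq_abs]

lemma UHPbar_eq : UHPbar = {x : Pt | x 0 ≤ x 1} := by
  ext x
  exact (le_iff_lt_or_eq (a := x 0)).symm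

lemma isClosed_UHPbar : IsClosed UHPbar := by
  rw [UHPbar_eq]
  exact isClosed_le (EuclideanSpace.proj (0 : Fin 2)).continuous
    (EuclideanSpace.proj (1 : Fin 2)).continuous

lemma mem_ball_inter_UHP_of_dist_lt {x y : Pt} {c : ℝ} (hy : y ∈ UHPbar) (hxy : dist x y < c)
    (hc : c ≤ persDist x) : y ∈ ball x c ∩ UHP := by
  refine ⟨mem_ball_comm.1 hxy, hy.resolve_right fun hyD => ?_⟩
  exact (infDist_le_dist_of_mem hyD).not_gt (hxy.trans_le hc)

lemma msupp_eq_support (π : Measure (Pt × Pt)) : msupp π = π.support := by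
  ext z
  simp only [msupp, Measure.mem_support_iff_forall, pos_iff_ne_zero]
  rfl

lemma ae_dist_lt_of_costInf_lt {π : Measure (Pt × Pt)} {c : ℝ}
    (h : CostInf π < ENNReal.ofReal c) : ∀ᵐ z ∂π, dist z.1 z.2 < c := by
  filter_upwards [Measure.support_mem_ae] with z hz
  have hle : ENNReal.ofReal (dist z.1 z.2) ≤ CostInf π :=
    le_iSup₂ (f := fun z (_ : z ∈ msupp π) => ENNReal.ofReal (dist z.1 z.2)) z
      (by rwa [msupp_eq_support])
  exact (ENNReal.ofReal_lt_ofReal_iff'.1 (hle.trans_lt h)).1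

lemma costInf_le_of_ae_dist_le {π : Measure (Pt × Pt)} {r : ℝ}
    (h : ∀ᵐ z ∂π, dist z.1 z.2 ≤ r) : CostInf π ≤ ENNReal.ofReal r := by
  have hsupp : msupp π ⊆ {z | dist z.1 z.2 ≤ r} := by
    rw [msupp_eq_support]
    exact Measure.support_subset_of_isClosed (isClosed_le (by fun_prop) continuous_const) h
  exact iSup₂_le fun z hz => ENNReal.ofReal_le_ofReal (hsupp hz)

lemma ae_mem_UHPbar_prod {μ ν : Measure Pt} {π : Measure (Pt × Pt)} (hπ : π ∈ Adm μ ν) :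
    ∀ᵐ z ∂π, z ∈ UHPbar ×ˢ UHPbar :=
  mem_ae_iff.2 hπ.1

lemma measure_singleton_le_of_costInf_lt {μ ν : Measure Pt} {π : Measure (Pt × Pt)}
    (hπ : π ∈ Adm μ ν) {c : ℝ} (hπc : CostInf π < ENNReal.ofReal c) {x : Pt} (hx : x ∈ UHP)
    (hc : c ≤ persDist x) :
    μ {x} ≤ ν (ball x c ∩ UHP) := by
  have hB : MeasurableSet (ball x c ∩ UHP) := measurableSet_ball.inter isOpen_UHP.measurableSet
  calc μ {x} = π ({x} ×ˢ univ) :=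
        (hπ.2.1 _ (measurableSet_singleton x) (singleton_subset_iff.2 hx)).symm
    _ ≤ π (univ ×ˢ (ball x c ∩ UHP)) := by
        refine measure_mono_ae ?_
        filter_upwards [ae_mem_UHPbar_prod hπ, ae_dist_lt_of_costInf_lt hπc]
          with z hz hdist hzx
        obtain rfl : z.1 = x := hzx.1
        exact ⟨mem_univ _, mem_ball_inter_UHP_of_dist_lt hz.2 hdist hc⟩
    _ = ν (ball x c ∩ UHP) := hπ.2.2 _ hB inter_subset_right

lemma measure_singleton_le_of_costInf_lt' {μ ν : Measure Pt} {π : Measure (Pt × Pt)}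
    (hπ : π ∈ Adm μ ν) {c : ℝ} (hπc : CostInf π < ENNReal.ofReal c) {x : Pt} (hx : x ∈ UHP)
    (hc : c ≤ persDist x) :
    ν {x} ≤ μ (ball x c ∩ UHP) := by
  have hB : MeasurableSet (ball x c ∩ UHP) := measurableSet_ball.inter isOpen_UHP.measurableSet
  calc ν {x} = π (univ ×ˢ {x}) :=
        (hπ.2.2 _ (measurableSet_singleton x) (singleton_subset_iff.2 hx)).symm
    _ ≤ π ((ball x c ∩ UHP) ×ˢ univ) := by
        refine measure_mono_ae ?_
        filter_upwards [ae_mem_UHPbar_prod hπ, ae_dist_lt_of_costInf_lt hπc]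
          with z hz hdist hzx
        obtain rfl : z.2 = x := hzx.2
        exact ⟨mem_ball_inter_UHP_of_dist_lt hz.1 (dist_comm z.1 z.2 ▸ hdist) hc, mem_univ _⟩
    _ = μ (ball x c ∩ UHP) := hπ.2.1 _ hB inter_subset_right

lemma ofReal_le_OTinfE {μ ν : Measure Pt} {x : Pt} (hx : x ∈ UHP) {c : ℝ} (hc : c ≤ persDist x)
    (h : μ {x} ≠ 0 ∧ ν (ball x c ∩ UHP) = 0 ∨ ν {x} ≠ 0 ∧ μ (ball x c ∩ UHP) = 0) :
    ENNReal.ofReal c ≤ OTinfE μ ν := by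
  refine le_iInf₂ fun π hπ => ?_
  by_contra! hπc
  rcases h with ⟨hx0, hball⟩ | ⟨hx0, hball⟩
  · exact hx0 (le_zero_iff.1 (hball ▸ measure_singleton_le_of_costInf_lt hπ hπc hx hc))
  · exact hx0 (le_zero_iff.1 (hball ▸ measure_singleton_le_of_costInf_lt' hπ hπc hx hc))

section DiagonalPlan

variable {ι κ : Type*}

def diagonalPlan (x x' : ι → Pt) (y y' : κ → Pt) : Measure (Pt × Pt) :=
  Measure.sum (fun i => Measure.dirac (x i, x' i)) +
    Measure.sum (fun j => Measure.dirac (y' j, y j))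

lemma ae_diagonalPlan_iff {x x' : ι → Pt} {y y' : κ → Pt} {p : Pt × Pt → Prop}
    (hp : MeasurableSet {z | p z}) :
    (∀ᵐ z ∂diagonalPlan x x' y y', p z) ↔ (∀ i, p (x i, x' i)) ∧ ∀ j, p (y' j, y j) := by
  simp only [diagonalPlan, ae_add_measure_iff, Measure.ae_sum_iff' hp, ae_dirac_iff hp]

lemma famMeasure_apply_eq_zero {x : ι → Pt} {A : Set Pt} (hA : MeasurableSet A)
    (h : ∀ i, x i ∉ A) : famMeasure x A = 0 := by
  simp [famMeasure, Measure.sum_apply _ hA, h]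

lemma famMeasure_apply_ne_zero {x : ι → Pt} {A : Set Pt} {i : ι} (h : x i ∈ A) :
    famMeasure x A ≠ 0 := by
  have hone : 1 ≤ famMeasure x A :=
    (Measure.dirac_apply_of_mem h).symm.le.trans (Measure.le_iff'.1 (Measure.le_sum _ i) A)
  exact (zero_lt_one.trans_le hone).ne'

lemma diagonalPlan_apply_prod_univ {x x' : ι → Pt} {y y' : κ → Pt} {A : Set Pt}
    (hA : MeasurableSet A) :
    diagonalPlan x x' y y' (A ×ˢ univ) = famMeasure x A + famMeasure y' A := by
  simp [diagonalPlan, famMeasure, Measure.sum_apply _ hA, Measure.sum_apply _ (hA.prod .univ),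
    indicator_prod_one]

lemma diagonalPlan_apply_univ_prod {x x' : ι → Pt} {y y' : κ → Pt} {A : Set Pt}
    (hA : MeasurableSet A) :
    diagonalPlan x x' y y' (univ ×ˢ A) = famMeasure x' A + famMeasure y A := by
  simp [diagonalPlan, famMeasure, Measure.sum_apply _ hA,
    Measure.sum_apply _ (MeasurableSet.univ.prod hA), indicator_prod_one]

lemma diagonalPlan_mem_Adm {x x' : ι → Pt} {y y' : κ → Pt} (hx : ∀ i, x i ∈ UHPbar)
    (hx' : ∀ i, x' i ∈ Diag) (hy : ∀ j, y j ∈ UHPbar) (hy' : ∀ j, y' j ∈ Diag) :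
    diagonalPlan x x' y y' ∈ Adm (famMeasure x) (famMeasure y) := by
  have hbar : MeasurableSet (UHPbar ×ˢ UHPbar) :=
    isClosed_UHPbar.measurableSet.prod isClosed_UHPbar.measurableSet
  have hdiag {A : Set Pt} (hA : A ⊆ UHP) {d : Pt} (hd : d ∈ Diag) : d ∉ A :=
    fun hdA => (hA hdA).ne hd
  refine ⟨mem_ae_iff.1 ((ae_diagonalPlan_iff hbar).2 ?_), fun A hA hAU => ?_, fun A hA hAU => ?_⟩
  · exact ⟨fun i => ⟨hx i, Or.inr (hx' i)⟩, fun j => ⟨Or.inr (hy' j), hy j⟩⟩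
  · rw [diagonalPlan_apply_prod_univ hA,
      famMeasure_apply_eq_zero hA fun j => hdiag hAU (hy' j), add_zero]
  · rw [diagonalPlan_apply_univ_prod hA,
      famMeasure_apply_eq_zero hA fun i => hdiag hAU (hx' i), zero_add]

lemma OTinfE_famMeasure_le {x x' : ι → Pt} {y y' : κ → Pt} (hx : ∀ i, x i ∈ UHPbar)
    (hx' : ∀ i, x' i ∈ Diag) (hy : ∀ j, y j ∈ UHPbar) (hy' : ∀ j, y' j ∈ Diag) {r : ℝ}
    (hxr : ∀ i, dist (x i) (x' i) ≤ r) (hyr : ∀ j, dist (y' j) (y j) ≤ r) :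
    OTinfE (famMeasure x) (famMeasure y) ≤ ENNReal.ofReal r := by
  have hle : MeasurableSet {z : Pt × Pt | dist z.1 z.2 ≤ r} :=
    measurableSet_le (by fun_prop) measurable_const
  exact (iInf₂_le _ (diagonalPlan_mem_Adm hx hx' hy hy')).trans
    (costInf_le_of_ae_dist_le ((ae_diagonalPlan_iff hle).2 ⟨hxr, hyr⟩))

end DiagonalPlan

lemma sqrt_two_div_two_eq : √2 / 2 = √(1 / 2) := by
  rw [eq_comm, Real.sqrt_eq_iff_mul_self_eq_of_pos (by positivity), div_mul_div_comm,
    Real.mul_self_sqrt zero_le_two]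
  norm_num

def aIPoint (i : ℕ) : Pt := mk2 i (i + 1)

def aIFoot (i : ℕ) : Pt := mk2 (i + 1 / 2) (i + 1 / 2)

lemma aI_eq_famMeasure (I : Set ℕ) : aI I = famMeasure fun i : I => aIPoint i := rfl

lemma aIPoint_mem_UHP (i : ℕ) : aIPoint i ∈ UHP := by
  simp [UHP, aIPoint]

lemma aIFoot_mem_Diag (i : ℕ) : aIFoot i ∈ Diag := rfl

lemma dist_aIPoint_aIFoot (i : ℕ) : dist (aIPoint i) (aIFoot i) = √2 / 2 := by
  rw [dist_eq_sqrt, sqrt_two_div_two_eq]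
  congr 1
  simp only [aIPoint, aIFoot, mk2_apply_zero, mk2_apply_one]
  ring

lemma sqrt_two_div_two_le_persDist_aIPoint (i : ℕ) : √2 / 2 ≤ persDist (aIPoint i) := by
  refine (le_infDist ⟨_, aIFoot_mem_Diag i⟩).2 fun y (hy : y 0 = y 1) => ?_
  rw [dist_eq_sqrt, sqrt_two_div_two_eq, ← hy]
  refine Real.sqrt_le_sqrt ?_
  simp only [aIPoint, mk2_apply_zero, mk2_apply_one]
  nlinarith [sq_nonneg ((i : ℝ) - y 0 + 1 / 2)]

lemma one_le_dist_aIPoint {i j : ℕ} (h : i ≠ j) : 1 ≤ dist (aIPoint i) (aIPoint j) := by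
  have hij : (1 : ℝ) ≤ |(i : ℝ) - j| := by
    exact_mod_cast Int.one_le_abs (sub_ne_zero.2 (Int.natCast_inj.not.2 h))
  rw [dist_eq_sqrt, ← Real.sqrt_one]
  refine Real.sqrt_le_sqrt ?_
  simp only [aIPoint, mk2_apply_zero, mk2_apply_one]
  nlinarith [sq_abs ((i : ℝ) - j)]

lemma aI_singleton_ne_zero {I : Set ℕ} {i : ℕ} (hi : i ∈ I) : aI I {aIPoint i} ≠ 0 :=
  famMeasure_apply_ne_zero (i := (⟨i, hi⟩ : I)) rfl

lemma aI_ball_inter_UHP_eq_zero {I : Set ℕ} {i : ℕ} (hi : i ∉ I) {c : ℝ} (hc : c ≤ 1) :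
    aI I (ball (aIPoint i) c ∩ UHP) = 0 := by
  refine famMeasure_apply_eq_zero (measurableSet_ball.inter isOpen_UHP.measurableSet) ?_
  rintro ⟨j, hj⟩ ⟨hjc, -⟩
  have hji : j ≠ i := fun h => hi (h ▸ hj)
  exact (one_le_dist_aIPoint hji).not_gt ((mem_ball.1 hjc).trans_le hc)

lemma mem_iff_aI_singleton_ne_zero {I : Set ℕ} {i : ℕ} : i ∈ I ↔ aI I {aIPoint i} ≠ 0 := by
  refine ⟨aI_singleton_ne_zero, fun h => by_contra fun hi => h (measure_mono_null ?_
    (aI_ball_inter_UHP_eq_zero hi le_rfl))⟩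
  exact singleton_subset_iff.2 ⟨mem_ball_self one_pos, aIPoint_mem_UHP i⟩

lemma OTinfE_aI_le (I J : Set ℕ) : OTinfE (aI I) (aI J) ≤ ENNReal.ofReal (√2 / 2) := by
  rw [aI_eq_famMeasure, aI_eq_famMeasure]
  exact OTinfE_famMeasure_le (x' := fun i : I => aIFoot i) (y' := fun j : J => aIFoot j)
    (fun i => Or.inl (aIPoint_mem_UHP i)) (fun i => aIFoot_mem_Diag i)
    (fun j => Or.inl (aIPoint_mem_UHP j)) (fun j => aIFoot_mem_Diag j)
    (fun i => (dist_aIPoint_aIFoot i).le)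
    (fun j => by rw [dist_comm]; exact (dist_aIPoint_aIFoot j).le)

lemma not_countable_set_nat : ¬ Countable (Set ℕ) := fun _ =>
  let ⟨f, hf⟩ := exists_injective_nat (Set ℕ)
  Function.cantor_injective f hf

/-- the family {a_I : I ⊆ ℕ} is uncountable and any two distinct
members are at bottleneck distance √2/2; hence (D^∞, OT_∞) is not separable. -/
theorem stmt15 :
    Function.Injective aI ∧ ¬ (Set.range aI).Countable ∧
    ∀ I J : Set ℕ, I ≠ J → OTinfE (aI I) (aI J) = ENNReal.ofReal (Real.sqrt 2 / 2) := by
  have hinj : Function.Injective aI := fun I J h => Set.ext fun i => by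
    rw [mem_iff_aI_singleton_ne_zero, mem_iff_aI_singleton_ne_zero, h]
  refine ⟨hinj, fun hc => not_countable_set_nat ?_, fun I J hIJ => le_antisymm ?_ ?_⟩
  · rw [← countable_univ_iff, ← preimage_range aI]
    exact hc.preimage hinj
  · exact OTinfE_aI_le I J
  · obtain ⟨i, hi⟩ : (symmDiff I J).Nonempty :=
      nonempty_iff_ne_empty.2 (symmDiff_eq_bot.not.2 hIJ)
    have hc : √2 / 2 ≤ 1 := by linarith [Real.sqrt_two_lt_three_halves]
    refine ofReal_le_OTinfE (aIPoint_mem_UHP i) (sqrt_two_div_two_le_persDist_aIPoint i) ?_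
    rcases mem_symmDiff.1 hi with ⟨hI, hJ⟩ | ⟨hJ, hI⟩
    · exact Or.inl ⟨aI_singleton_ne_zero hI, aI_ball_inter_UHP_eq_zero hJ hc⟩
    · exact Or.inr ⟨aI_singleton_ne_zero hJ, aI_ball_inter_UHP_eq_zero hI hc⟩
end
end

section
/- Let B be a Banach space and f : Ω → B. The linear representation Φ : M^p → B defined by Φ(μ) = ∫_Ω f(x) dμ(x) is continuous with respect to OT_p if and only if f is continuous and x ↦ f(x)/d(x,∂Ω)^p is bounded on Ω. -/
noncomputable section

open MeasureTheory Metric Set Filter Topology ENNReal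
open scoped Classical

/-!
Testing `Φ` on point masses gives both conditions. The plan `δ_(x,y)` shows
`OT_p(δ_x, δ_y)^p ≤ d(x, y)^p`, whence continuity; sending the mass `‖f x‖⁻¹ δ_x` to the nearest
diagonal point costs `d(x, ∂Ω)^p / ‖f x‖`, while its image under `Φ` has norm one, whence the
growth bound.

Conversely, for an admissible plan `π` from `μₙ` to `μ`, `Φ μₙ - Φ μ = ∫ (f̃ x - f̃ y) dπ`, where
`f̃` extends `f` by zero off `Ω`. By inner regularity of the finite measure `μ^p` there is a compact
`K ⊆ Ω` with `μ^p(Ω \ K)` small. When `y ∈ K` and `x` is close to `y`, uniform continuity makes the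
integrand small; otherwise the growth bound controls it by `κ₁ d(x, y)^p`, plus `κ₂ d(y, ∂Ω)^p`
when `y ∉ K`. Integrating gives `‖Φ μₙ - Φ μ‖ ≤ ε μ(K) + κ₁ C_p(π) + κ₂ μ^p(Ω \ K)`, and `C_p(π)`
can be taken close to `OT_p(μₙ, μ)^p → 0`.
-/
lemma exists_pos_ofReal_mul_lt {a b : ℝ≥0∞} (ha : a ≠ ⊤) (hb : b ≠ 0) :
    ∃ ε : ℝ, 0 < ε ∧ ENNReal.ofReal ε * a < b := by
  obtain ⟨ε, -, hε0, hε⟩ := ENNReal.lt_iff_exists_real_btwn.1 (ENNReal.div_pos_iff.2 ⟨hb, ha⟩)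
  exact ⟨ε, ENNReal.ofReal_pos.1 hε0, ENNReal.mul_lt_of_lt_div hε⟩

lemma IsCompact.exists_pos_forall_dist_lt {α β : Type*} [PseudoMetricSpace α]
    [PseudoMetricSpace β] {K : Set α} (hK : IsCompact K) {g : α → β}
    (hg : ∀ y ∈ K, ContinuousAt g y) {ε : ℝ} (hε : 0 < ε) :
    ∃ r > 0, ∀ y ∈ K, ∀ x, dist y x < r → dist (g y) (g x) < ε := by
  obtain ⟨r, hr, h⟩ := Metric.mem_uniformity_dist.1
    (hK.uniformContinuousAt_of_continuousAt g hg (Metric.dist_mem_uniformity hε))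
  exact ⟨r, hr, fun y hy x hyx => h hyx hy⟩

lemma Diag_nonempty : Diag.Nonempty := ⟨0, rfl⟩

lemma persDist_of_mem_Diag {x : Pt} (hx : x ∈ Diag) : persDist x = 0 := infDist_zero_of_mem hx

lemma persDist_pos_of_mem_UHP {x : Pt} (hx : x ∈ UHP) : 0 < persDist x :=
  (isClosed_Diag.notMem_iff_infDist_pos Diag_nonempty).1 (notMem_Diag_of_mem_UHP hx)

lemma persDist_le_add_dist (x y : Pt) : persDist x ≤ persDist y + dist x y :=
  infDist_le_infDist_add_dist

lemma exists_mem_Diag_dist_eq_persDist (x : Pt) : ∃ y ∈ Diag, dist x y = persDist x := by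
  obtain ⟨y, hy, h⟩ := isClosed_Diag.exists_infDist_eq_dist Diag_nonempty x
  exact ⟨y, hy, h.symm⟩

lemma measurable_ofReal_persDist_rpow (p : ℝ) :
    Measurable fun x : Pt => ENNReal.ofReal (persDist x ^ p) :=
  (continuous_persDist.measurable.pow_const p).ennreal_ofReal

lemma MemMp.restrict_UHP {p : ℝ} {μ : Measure Pt} (hμ : MemMp p μ) : μ.restrict UHP = μ :=
  Measure.restrict_eq_self_of_ae_mem (ae_iff.2 hμ.1)

lemma memMp_zero (p : ℝ) : MemMp p 0 := ⟨rfl, by simp [Pers]⟩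

lemma memMp_smul_dirac (p : ℝ) {a : Pt} (ha : a ∈ UHP) {c : ℝ≥0∞} (hc : c ≠ ⊤) :
    MemMp p (c • Measure.dirac a) := by
  refine ⟨by simp [Measure.dirac_apply, ha], ?_⟩
  simpa [Pers, restrict_dirac, ha, lintegral_smul_measure] using
    ENNReal.mul_lt_top hc.lt_top ENNReal.ofReal_lt_top

lemma memMp_dirac (p : ℝ) {a : Pt} (ha : a ∈ UHP) : MemMp p (Measure.dirac a) := by
  simpa using memMp_smul_dirac p ha ENNReal.one_ne_top

lemma smul_dirac_mem_Adm {a b : Pt} (ha : a ∈ UHPbar) (hb : b ∈ UHPbar) (c : ℝ≥0∞) :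
    c • Measure.dirac (a, b) ∈
      Adm ((c • Measure.dirac a).restrict UHP) ((c • Measure.dirac b).restrict UHP) := by
  refine ⟨by simp [Measure.dirac_apply, ha, hb], fun A _ hA => ?_, fun B _ hB => ?_⟩
  · rw [Measure.restrict_apply' measurableSet_UHP, inter_eq_left.2 hA]
    simp [Measure.dirac_apply, indicator]
  · rw [Measure.restrict_apply' measurableSet_UHP, inter_eq_left.2 hB]
    simp [Measure.dirac_apply, indicator]

lemma OTe_le_smul_dirac (p : ℝ) {a b : Pt} (ha : a ∈ UHPbar) (hb : b ∈ UHPbar) (c : ℝ≥0∞) :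
    OTe p ((c • Measure.dirac a).restrict UHP) ((c • Measure.dirac b).restrict UHP) ≤
      c * ENNReal.ofReal (dist a b ^ p) :=
  (iInf₂_le _ (smul_dirac_mem_Adm ha hb c)).trans_eq (by simp [Cost, lintegral_smul_measure])

lemma OTe_dirac_le (p : ℝ) {a b : Pt} (ha : a ∈ UHP) (hb : b ∈ UHP) :
    OTe p (Measure.dirac a) (Measure.dirac b) ≤ ENNReal.ofReal (dist a b ^ p) := by
  simpa [restrict_dirac, ha, hb] using OTe_le_smul_dirac p (Or.inl ha) (Or.inl hb) 1

lemma OTe_smul_dirac_zero_le (p : ℝ) {a : Pt} (ha : a ∈ UHP) (c : ℝ≥0∞) :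
    OTe p (c • Measure.dirac a) 0 ≤ c * ENNReal.ofReal (persDist a ^ p) := by
  obtain ⟨b, hb, hab⟩ := exists_mem_Diag_dist_eq_persDist a
  have hbU : b ∉ UHP := fun h => notMem_Diag_of_mem_UHP h hb
  simpa [restrict_dirac, ha, hbU, hab] using OTe_le_smul_dirac p (Or.inl ha) (Or.inr hb) c

lemma tendsto_ofReal_dist_rpow {p : ℝ} (hp : 0 < p) {u : ℕ → Pt} {x : Pt}
    (hu : Tendsto u atTop (𝓝 x)) :
    Tendsto (fun n => ENNReal.ofReal (dist (u n) x ^ p)) atTop (𝓝 0) := by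
  have h := (tendsto_iff_dist_tendsto_zero.1 hu).rpow_const (Or.inr hp.le)
  rw [Real.zero_rpow hp.ne'] at h
  simpa using ENNReal.tendsto_ofReal h

section Representation

variable {B : Type*} [NormedAddCommGroup B] [NormedSpace ℝ B] {f : Pt → B} {p : ℝ}

def IsOTContinuousIntegral (p : ℝ) (f : Pt → B) : Prop :=
  ∀ (μ : Measure Pt) (μs : ℕ → Measure Pt), MemMp p μ → (∀ n, MemMp p (μs n)) →
    Tendsto (fun n => OTe p (μs n) μ) atTop (𝓝 0) →
    Tendsto (fun n => ∫ x, f x ∂(μs n)) atTop (𝓝 (∫ x, f x ∂μ))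

variable [CompleteSpace B]

lemma IsOTContinuousIntegral.continuousOn (hp : 0 < p) (H : IsOTContinuousIntegral p f) :
    ContinuousOn f UHP := by
  rw [continuousOn_iff_continuous_domRestrict, continuous_iff_seqContinuous]
  intro u x hu
  have hOT : Tendsto (fun n => OTe p (Measure.dirac (u n : Pt)) (Measure.dirac (x : Pt)))
      atTop (𝓝 0) :=
    tendsto_of_tendsto_of_tendsto_of_le_of_le tendsto_const_nhds
      (tendsto_ofReal_dist_rpow hp ((continuous_subtype_val.tendsto x).comp hu))
      (fun _ => zero_le) fun n => OTe_dirac_le p (u n).2 x.2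
  simpa [Function.comp_def] using
    H _ _ (memMp_dirac p x.2) (fun n => memMp_dirac p (u n).2) hOT

lemma IsOTContinuousIntegral.exists_norm_le (H : IsOTContinuousIntegral p f) :
    ∃ C : ℝ, ∀ x ∈ UHP, ‖f x‖ ≤ C * persDist x ^ p := by
  by_contra! h
  choose x hxU hx using fun n : ℕ => h (n + 1)
  have hfx : ∀ n, 0 < ‖f (x n)‖ := fun n =>
    (mul_nonneg n.cast_add_one_pos.le (Real.rpow_nonneg (persDist_nonneg _) p)).trans_lt (hx n)
  set c : ℕ → ℝ≥0∞ := fun n => ENNReal.ofReal ‖f (x n)‖⁻¹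
  have hOT : Tendsto (fun n => OTe p (c n • Measure.dirac (x n)) 0) atTop (𝓝 0) := by
    refine tendsto_of_tendsto_of_tendsto_of_le_of_le tendsto_const_nhds
      (by simpa using ENNReal.tendsto_ofReal tendsto_one_div_add_atTop_nhds_zero_nat)
      (fun _ => zero_le) fun n => (OTe_smul_dirac_zero_le p (hxU n) _).trans ?_
    rw [← ENNReal.ofReal_mul (inv_nonneg.2 (norm_nonneg _))]
    refine ENNReal.ofReal_le_ofReal ?_
    rw [inv_mul_le_iff₀ (hfx n), ← div_eq_mul_inv, le_div_iff₀ n.cast_add_one_pos, mul_comm]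
    exact (hx n).le
  have hnorm : ∀ n, ‖∫ y, f y ∂(c n • Measure.dirac (x n))‖ = 1 := fun n => by
    rw [integral_smul_measure, integral_dirac, norm_smul,
      ENNReal.toReal_ofReal (inv_nonneg.2 (norm_nonneg _)), norm_inv, norm_norm,
      inv_mul_cancel₀ (hfx n).ne']
  have h0 := (H 0 _ (memMp_zero p)
    (fun n => memMp_smul_dirac p (hxU n) ENNReal.ofReal_ne_top) hOT).norm
  rw [integral_zero_measure, norm_zero] at h0
  exact one_ne_zero (tendsto_const_nhds_iff.1 (h0.congr hnorm))

end Representation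

lemma exists_isCompact_wgt_sdiff_lt {p : ℝ} {μ : Measure Pt} (hμ : Pers p μ < ⊤) {η : ℝ≥0∞}
    (hη : η ≠ 0) : ∃ K ⊆ UHP, IsCompact K ∧ wgt p μ (UHP \ K) < η :=
  measurableSet_UHP.exists_isCompact_sdiff_lt
    (by rw [wgt, withDensity_apply _ measurableSet_UHP]; exact hμ.ne) hη

lemma measure_lt_top_of_isCompact {p : ℝ} {μ : Measure Pt} (hμ : Pers p μ < ⊤) {K : Set Pt}
    (hK : IsCompact K) (hKU : K ⊆ UHP) : μ K < ⊤ := by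
  obtain ⟨δ, hδ, hδK⟩ := hK.exists_forall_le' (f := fun y => persDist y ^ p)
    (continuous_persDist.continuousOn.rpow_const fun y hy =>
      Or.inl (persDist_pos_of_mem_UHP (hKU hy)).ne')
    fun y hy => Real.rpow_pos_of_pos (persDist_pos_of_mem_UHP (hKU hy)) p
  have hle : ENNReal.ofReal δ * μ K ≤ Pers p μ :=
    calc ENNReal.ofReal δ * μ K = ∫⁻ _ in K, ENNReal.ofReal δ ∂μ := (setLIntegral_const _ _).symm
      _ ≤ ∫⁻ y in K, ENNReal.ofReal (persDist y ^ p) ∂μ :=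
        setLIntegral_mono (measurable_ofReal_persDist_rpow p) fun y hy =>
          ENNReal.ofReal_le_ofReal (hδK y hy)
      _ ≤ Pers p μ := lintegral_mono_set hKU
  exact ENNReal.lt_top_of_mul_ne_top_right (hle.trans_lt hμ).ne (ENNReal.ofReal_pos.2 hδ).ne'

section Plans

variable {π : Measure (Pt × Pt)} {μ ν : Measure Pt}

lemma restrict_map_fst_of_mem_Adm (hπ : π ∈ Adm μ ν) :
    (π.map Prod.fst).restrict UHP = μ.restrict UHP := by
  ext A hA
  rw [Measure.restrict_apply hA, Measure.restrict_apply hA,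
    Measure.map_apply measurable_fst (hA.inter measurableSet_UHP), ← prod_univ]
  exact hπ.2.1 _ (hA.inter measurableSet_UHP) inter_subset_right

lemma restrict_map_snd_of_mem_Adm (hπ : π ∈ Adm μ ν) :
    (π.map Prod.snd).restrict UHP = ν.restrict UHP := by
  ext A hA
  rw [Measure.restrict_apply hA, Measure.restrict_apply hA,
    Measure.map_apply measurable_snd (hA.inter measurableSet_UHP), ← univ_prod]
  exact hπ.2.2 _ (hA.inter measurableSet_UHP) inter_subset_right

variable {e : Pt × Pt → Pt}

lemma lintegral_indicator_comp_of_restrict_map (he : Measurable e)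
    (hmarg : (π.map e).restrict UHP = ν.restrict UHP) {S : Set Pt} (hS : MeasurableSet S)
    (hSU : S ⊆ UHP) {h : Pt → ℝ≥0∞} (hh : Measurable h) :
    ∫⁻ z, S.indicator h (e z) ∂π = ∫⁻ y in S, h y ∂ν := by
  rw [← lintegral_map (hh.indicator hS) he, lintegral_indicator hS,
    ← Measure.restrict_restrict_of_subset hSU, hmarg, Measure.restrict_restrict_of_subset hSU]

variable {B : Type*} [NormedAddCommGroup B] {f : Pt → B}

lemma aestronglyMeasurable_indicator_UHP (hfc : ContinuousOn f UHP) (m : Measure Pt) :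
    AEStronglyMeasurable (UHP.indicator f) m :=
  (aestronglyMeasurable_indicator_iff measurableSet_UHP).2
    (hfc.aestronglyMeasurable measurableSet_UHP)

lemma integrableOn_UHP_of_norm_le {p C : ℝ} (hfc : ContinuousOn f UHP) (hC : 0 ≤ C)
    (hfb : ∀ x ∈ UHP, ‖f x‖ ≤ C * persDist x ^ p) (hν : Pers p ν < ⊤) :
    IntegrableOn f UHP ν := by
  refine ⟨hfc.aestronglyMeasurable measurableSet_UHP, ?_⟩
  calc ∫⁻ x in UHP, ‖f x‖ₑ ∂ν
      ≤ ∫⁻ x in UHP, ENNReal.ofReal C * ENNReal.ofReal (persDist x ^ p) ∂ν :=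
        setLIntegral_mono ((measurable_ofReal_persDist_rpow p).const_mul _) fun x hx => by
          rw [← ENNReal.ofReal_mul hC, ← ofReal_norm]
          exact ENNReal.ofReal_le_ofReal (hfb x hx)
    _ = ENNReal.ofReal C * Pers p ν := lintegral_const_mul _ (measurable_ofReal_persDist_rpow p)
    _ < ⊤ := ENNReal.mul_lt_top ENNReal.ofReal_lt_top hν

lemma integrable_indicator_comp_of_restrict_map (he : Measurable e)
    (hmarg : (π.map e).restrict UHP = ν.restrict UHP) (hfc : ContinuousOn f UHP)
    (hf : IntegrableOn f UHP ν) : Integrable (fun z => UHP.indicator f (e z)) π := by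
  refine (integrable_map_measure (aestronglyMeasurable_indicator_UHP hfc _)
    he.aemeasurable).1 ?_
  rwa [integrable_indicator_iff measurableSet_UHP, IntegrableOn, hmarg]

variable [NormedSpace ℝ B]

lemma integral_indicator_comp_of_restrict_map (he : Measurable e)
    (hmarg : (π.map e).restrict UHP = ν.restrict UHP) (hfc : ContinuousOn f UHP) :
    ∫ z, UHP.indicator f (e z) ∂π = ∫ y in UHP, f y ∂ν := by
  rw [← integral_map he.aemeasurable (aestronglyMeasurable_indicator_UHP hfc _),
    integral_indicator measurableSet_UHP, hmarg]

end Plans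

section Estimates

variable {B : Type*} [NormedAddCommGroup B] {f : Pt → B} {p C : ℝ}

lemma norm_indicator_UHP_le (hC : 0 ≤ C) (hfb : ∀ x ∈ UHP, ‖f x‖ ≤ C * persDist x ^ p)
    (x : Pt) : ‖UHP.indicator f x‖ ≤ C * persDist x ^ p := by
  by_cases hx : x ∈ UHP
  · simpa [hx] using hfb x hx
  · rw [indicator_of_notMem hx, norm_zero]
    exact mul_nonneg hC (Real.rpow_nonneg (persDist_nonneg x) p)

lemma norm_indicator_UHP_sub_le (hp : 0 ≤ p) (hC : 0 ≤ C)
    (hfb : ∀ x ∈ UHP, ‖f x‖ ≤ C * persDist x ^ p) (x y : Pt) :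
    ‖UHP.indicator f x - UHP.indicator f y‖ ≤
      C * (2 ^ p + 1) * (persDist y ^ p + dist x y ^ p) := by
  set b := persDist y
  set t := dist x y
  have hb : 0 ≤ b := persDist_nonneg y
  have ht : 0 ≤ t := dist_nonneg
  have hmax : persDist x ≤ 2 * max b t := (persDist_le_add_dist x y).trans (by
    linarith [le_max_left b t, le_max_right b t])
  have hmax_rpow : max b t ^ p ≤ b ^ p + t ^ p := by
    rcases max_cases b t with ⟨h, -⟩ | ⟨h, -⟩ <;> rw [h]
    · linarith [Real.rpow_nonneg ht p]
    · linarith [Real.rpow_nonneg hb p]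
  have hx : persDist x ^ p ≤ 2 ^ p * (b ^ p + t ^ p) :=
    calc persDist x ^ p ≤ (2 * max b t) ^ p := Real.rpow_le_rpow (persDist_nonneg x) hmax hp
      _ = 2 ^ p * max b t ^ p := Real.mul_rpow zero_le_two (hb.trans (le_max_left b t))
      _ ≤ 2 ^ p * (b ^ p + t ^ p) := by gcongr
  calc ‖UHP.indicator f x - UHP.indicator f y‖
      ≤ C * persDist x ^ p + C * b ^ p :=
        (norm_sub_le _ _).trans (add_le_add (norm_indicator_UHP_le hC hfb x)
          (norm_indicator_UHP_le hC hfb y))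
    _ ≤ C * (2 ^ p * (b ^ p + t ^ p)) + C * (b ^ p + t ^ p) := by
        gcongr
        linarith [Real.rpow_nonneg ht p]
    _ = C * (2 ^ p + 1) * (b ^ p + t ^ p) := by ring

lemma norm_indicator_UHP_sub_le_of_le_dist (hp : 0 ≤ p) (hC : 0 ≤ C)
    (hfb : ∀ x ∈ UHP, ‖f x‖ ≤ C * persDist x ^ p) {R r : ℝ} (hr : 0 < r) {x y : Pt}
    (hyR : persDist y ≤ R) (hrxy : r ≤ dist x y) :
    ‖UHP.indicator f x - UHP.indicator f y‖ ≤ 2 * C * (R / r + 1) ^ p * dist x y ^ p := by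
  set t := dist x y
  have ht : 0 ≤ t := dist_nonneg
  have hR : 0 ≤ R / r := div_nonneg ((persDist_nonneg y).trans hyR) hr.le
  have hRt : R ≤ R / r * t := by
    calc R = R / r * r := (div_mul_cancel₀ R hr.ne').symm
      _ ≤ R / r * t := by gcongr
  have hy : persDist y ≤ (R / r + 1) * t := by nlinarith
  have hx : persDist x ≤ (R / r + 1) * t := by linarith [persDist_le_add_dist x y]
  calc ‖UHP.indicator f x - UHP.indicator f y‖
      ≤ C * persDist x ^ p + C * persDist y ^ p :=
        (norm_sub_le _ _).trans (add_le_add (norm_indicator_UHP_le hC hfb x)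
          (norm_indicator_UHP_le hC hfb y))
    _ ≤ C * ((R / r + 1) * t) ^ p + C * ((R / r + 1) * t) ^ p := by
        gcongr <;> exact persDist_nonneg _
    _ = 2 * C * (R / r + 1) ^ p * t ^ p := by
        rw [Real.mul_rpow (by positivity) ht]
        ring

lemma enorm_indicator_UHP_sub_le (hp : 0 < p) (hC : 0 ≤ C)
    (hfb : ∀ x ∈ UHP, ‖f x‖ ≤ C * persDist x ^ p) {K : Set Pt} {R r ε : ℝ} (hR : 0 ≤ R)
    (hr : 0 < r) (hKR : ∀ y ∈ K, persDist y ≤ R)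
    (hUC : ∀ y ∈ K, ∀ x, dist y x < r → dist (UHP.indicator f y) (UHP.indicator f x) < ε)
    {x y : Pt} (hy : y ∈ UHPbar) :
    ‖UHP.indicator f x - UHP.indicator f y‖ₑ ≤
      K.indicator (fun _ => ENNReal.ofReal ε) y
        + ENNReal.ofReal (dist x y ^ p)
          * ENNReal.ofReal (C * (2 ^ p + 1) + 2 * C * (R / r + 1) ^ p)
        + (UHP \ K).indicator (fun y => ENNReal.ofReal (persDist y ^ p)) y
          * ENNReal.ofReal (C * (2 ^ p + 1)) := by
  set κ₂ := C * (2 ^ p + 1)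
  set κ := 2 * C * (R / r + 1) ^ p
  set t := dist x y
  have hκ₂ : 0 ≤ κ₂ := by positivity
  have hκ : 0 ≤ κ := by positivity
  have htp : 0 ≤ t ^ p := Real.rpow_nonneg dist_nonneg p
  rw [← ofReal_norm]
  by_cases hyK : y ∈ K
  · have hyS : y ∉ UHP \ K := fun h => h.2 hyK
    rw [indicator_of_mem hyK, indicator_of_notMem hyS, zero_mul, add_zero]
    rcases lt_or_ge t r with hnear | hfar
    · have h := hUC y hyK x (by rwa [dist_comm])
      rw [dist_eq_norm, norm_sub_rev] at h
      exact (ENNReal.ofReal_le_ofReal h.le).trans le_self_add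
    · refine le_add_left ?_
      rw [← ENNReal.ofReal_mul htp]
      refine ENNReal.ofReal_le_ofReal ((norm_indicator_UHP_sub_le_of_le_dist hp.le hC hfb hr
        (hKR y hyK) hfar).trans ?_)
      nlinarith
  · have hφ : (UHP \ K).indicator (fun y => ENNReal.ofReal (persDist y ^ p)) y
        = ENNReal.ofReal (persDist y ^ p) := by
      rcases hy with hyU | hyD
      · exact indicator_of_mem (show y ∈ UHP \ K from ⟨hyU, hyK⟩) _
      · rw [indicator_of_notMem fun h => notMem_Diag_of_mem_UHP h.1 hyD,
          persDist_of_mem_Diag hyD, Real.zero_rpow hp.ne', ENNReal.ofReal_zero]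
    rw [indicator_of_notMem hyK, zero_add, hφ, ← ENNReal.ofReal_mul htp,
      ← ENNReal.ofReal_mul (Real.rpow_nonneg (persDist_nonneg y) p),
      ← ENNReal.ofReal_add (mul_nonneg htp (add_nonneg hκ₂ hκ))
        (mul_nonneg (Real.rpow_nonneg (persDist_nonneg y) p) hκ₂)]
    refine ENNReal.ofReal_le_ofReal ((norm_indicator_UHP_sub_le hp.le hC hfb x y).trans ?_)
    nlinarith

variable [NormedSpace ℝ B] {μn μ : Measure Pt} {π : Measure (Pt × Pt)}

lemma edist_integral_le_of_mem_Adm (hfc : ContinuousOn f UHP) (hC : 0 ≤ C)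
    (hfb : ∀ x ∈ UHP, ‖f x‖ ≤ C * persDist x ^ p) (hμn : MemMp p μn) (hμ : MemMp p μ)
    (hπ : π ∈ Adm μn μ) {K : Set Pt} (hK : MeasurableSet K) (hKU : K ⊆ UHP) {ε κ₁ κ₂ : ℝ}
    (hbound : ∀ x, ∀ y ∈ UHPbar, ‖UHP.indicator f x - UHP.indicator f y‖ₑ ≤
      K.indicator (fun _ => ENNReal.ofReal ε) y
        + ENNReal.ofReal (dist x y ^ p) * ENNReal.ofReal κ₁
        + (UHP \ K).indicator (fun y => ENNReal.ofReal (persDist y ^ p)) y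
          * ENNReal.ofReal κ₂) :
    edist (∫ x, f x ∂μn) (∫ x, f x ∂μ) ≤
      ENNReal.ofReal ε * μ K + Cost p π * ENNReal.ofReal κ₁
        + wgt p μ (UHP \ K) * ENNReal.ofReal κ₂ := by
  have hfst := restrict_map_fst_of_mem_Adm hπ
  have hsnd := restrict_map_snd_of_mem_Adm hπ
  have hdiff : (∫ x, f x ∂μn) - ∫ x, f x ∂μ
      = ∫ z, (UHP.indicator f z.1 - UHP.indicator f z.2) ∂π := by
    rw [integral_sub
      (integrable_indicator_comp_of_restrict_map measurable_fst hfst hfc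
        (integrableOn_UHP_of_norm_le hfc hC hfb hμn.2))
      (integrable_indicator_comp_of_restrict_map measurable_snd hsnd hfc
        (integrableOn_UHP_of_norm_le hfc hC hfb hμ.2)),
      integral_indicator_comp_of_restrict_map measurable_fst hfst hfc,
      integral_indicator_comp_of_restrict_map measurable_snd hsnd hfc,
      hμn.restrict_UHP, hμ.restrict_UHP]
  have hae : ∀ᵐ z ∂π, z.2 ∈ UHPbar := (ae_iff.2 hπ.1).mono fun z hz => hz.2
  have hS : MeasurableSet (UHP \ K) := measurableSet_UHP.diff hK
  have hmK : Measurable fun z : Pt × Pt => K.indicator (fun _ => ENNReal.ofReal ε) z.2 :=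
    (measurable_const.indicator hK).comp measurable_snd
  have hmS : Measurable fun z : Pt × Pt =>
      (UHP \ K).indicator (fun y => ENNReal.ofReal (persDist y ^ p)) z.2 :=
    ((measurable_ofReal_persDist_rpow p).indicator hS).comp measurable_snd
  have hmCost : Measurable fun z : Pt × Pt => ENNReal.ofReal (dist z.1 z.2 ^ p) :=
    (continuous_dist.measurable.pow_const p).ennreal_ofReal
  rw [edist_eq_enorm_sub, hdiff]
  calc _ ≤ ∫⁻ z, ‖UHP.indicator f z.1 - UHP.indicator f z.2‖ₑ ∂π :=
        enorm_integral_le_lintegral_enorm _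
    _ ≤ _ := lintegral_mono_ae (hae.mono fun z hz => hbound z.1 z.2 hz)
    _ = _ := by
      rw [lintegral_add_right _ (hmS.mul_const _), lintegral_add_left hmK,
        lintegral_mul_const _ hmCost, lintegral_mul_const _ hmS,
        lintegral_indicator_comp_of_restrict_map measurable_snd hsnd hK hKU measurable_const,
        lintegral_indicator_comp_of_restrict_map measurable_snd hsnd hS sdiff_subset
          (measurable_ofReal_persDist_rpow p),
        setLIntegral_const, wgt, withDensity_apply _ hS, Cost]

end Estimates

lemma continuousAt_indicator_UHP {B : Type*} [NormedAddCommGroup B] {f : Pt → B}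
    (hfc : ContinuousOn f UHP) {y : Pt} (hy : y ∈ UHP) : ContinuousAt (UHP.indicator f) y :=
  (hfc.congr fun _ hx => indicator_of_mem hx f).continuousAt (isOpen_UHP.mem_nhds hy)

theorem isOTContinuousIntegral_of_continuousOn {B : Type*} [NormedAddCommGroup B]
    [NormedSpace ℝ B] {f : Pt → B} {p : ℝ} (hp : 0 < p) (hfc : ContinuousOn f UHP)
    (hfb : ∃ C : ℝ, ∀ x ∈ UHP, ‖f x‖ ≤ C * persDist x ^ p) : IsOTContinuousIntegral p f := by
  obtain ⟨C, hC, hfb⟩ : ∃ C, 0 ≤ C ∧ ∀ x ∈ UHP, ‖f x‖ ≤ C * persDist x ^ p :=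
    let ⟨C, h⟩ := hfb
    ⟨max C 0, le_max_right C 0, fun x hx => (h x hx).trans <|
      mul_le_mul_of_nonneg_right (le_max_left C 0) (Real.rpow_nonneg (persDist_nonneg x) p)⟩
  intro μ μs hμ hμs hOT
  rw [EMetric.tendsto_atTop]
  intro ε hε
  have hε3 : ε / 3 ≠ 0 := ENNReal.div_ne_zero.2 ⟨hε.ne', ENNReal.ofNat_ne_top⟩
  have hpos : ∀ κ : ℝ, 0 < ε / 3 / ENNReal.ofReal κ := fun κ =>
    ENNReal.div_pos_iff.2 ⟨hε3, ENNReal.ofReal_ne_top⟩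
  set κ₂ := C * (2 ^ p + 1)
  obtain ⟨K, hKU, hKc, htail⟩ := exists_isCompact_wgt_sdiff_lt hμ.2 (hpos κ₂).ne'
  obtain ⟨ε', hε', hεK⟩ :=
    exists_pos_ofReal_mul_lt (measure_lt_top_of_isCompact hμ.2 hKc hKU).ne hε3
  obtain ⟨r, hr, hUC⟩ :=
    hKc.exists_pos_forall_dist_lt (fun y hy => continuousAt_indicator_UHP hfc (hKU hy)) hε'
  obtain ⟨R, hR, hKR⟩ : ∃ R, 0 ≤ R ∧ ∀ y ∈ K, persDist y ≤ R :=
    let ⟨R, hR⟩ := hKc.bddAbove_image continuous_persDist.continuousOn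
    ⟨max R 0, le_max_right R 0, fun y hy => (hR (mem_image_of_mem _ hy)).trans (le_max_left R 0)⟩
  set κ₁ := κ₂ + 2 * C * (R / r + 1) ^ p
  obtain ⟨N, hN⟩ := eventually_atTop.1 <| hOT.eventually <| gt_mem_nhds (hpos κ₁)
  refine ⟨N, fun n hn => ?_⟩
  obtain ⟨π, hπ, hcost⟩ : ∃ π ∈ Adm (μs n) μ, Cost p π < ε / 3 / ENNReal.ofReal κ₁ := by
    simpa only [OTe, iInf_lt_iff, exists_prop] using hN n hn
  calc edist (∫ x, f x ∂μs n) (∫ x, f x ∂μ)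
      ≤ ENNReal.ofReal ε' * μ K + Cost p π * ENNReal.ofReal κ₁
          + wgt p μ (UHP \ K) * ENNReal.ofReal κ₂ :=
        edist_integral_le_of_mem_Adm hfc hC hfb (hμs n) hμ hπ hKc.measurableSet hKU
          fun x y hy => enorm_indicator_UHP_sub_le hp hC hfb hR hr hKR hUC hy
    _ < ε / 3 + ε / 3 + ε / 3 := ENNReal.add_lt_add
        (ENNReal.add_lt_add hεK (ENNReal.mul_lt_of_lt_div hcost))
        (ENNReal.mul_lt_of_lt_div htail)
    _ = ε := ENNReal.add_thirds ε

/-- the linear representation Φ(μ) = ∫ f dμ, with values in a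
Banach space, is OT_p-continuous iff f is continuous on Ω and f/d(·,∂Ω)^p is
bounded on Ω. -/
theorem stmt18 (p : ℝ) (hp : 1 ≤ p) {B : Type*} [NormedAddCommGroup B]
    [NormedSpace ℝ B] [CompleteSpace B] (f : Pt → B) :
    ((∀ (μ : Measure Pt) (μs : ℕ → Measure Pt), MemMp p μ → (∀ n, MemMp p (μs n)) →
        Tendsto (fun n => OTe p (μs n) μ) atTop (𝓝 0) →
        Tendsto (fun n => ∫ x, f x ∂(μs n)) atTop (𝓝 (∫ x, f x ∂μ))) ↔
      (ContinuousOn f UHP ∧ ∃ C : ℝ, ∀ x ∈ UHP, ‖f x‖ ≤ C * persDist x ^ p)) := by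
  have hp0 : 0 < p := by linarith
  exact ⟨fun H => ⟨IsOTContinuousIntegral.continuousOn hp0 H,
      IsOTContinuousIntegral.exists_norm_le H⟩,
    fun ⟨hfc, hfb⟩ => isOTContinuousIntegral_of_continuousOn hp0 hfc hfb⟩
end
end
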